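/- arXiv:2104.06185 — 7 statements merged into one kernel-verified Lean document; each statement's English description precedes it below -/
import Mathlib

section
/- Let a(x) = a_n x^n + a_{n-1} x^{n-1} + ... + a_1 x + a_0 and b(x) = b_{n-k} x^{n-k} + ... + b_1 x + b_0 be real polynomials with a_n ≠ 0, b_{n-k} ≠ 0, where n > k ≥ 1 are integers (with the convention b_m = 0 for m < 0). Then the function f(x) = a(x)/b(x) has a polynomial asymptote g of degree k, namely g(x) = Σ_{α=0}^{k} θ_α x^{k-α} where θ_α = (-1)^α · det(M_α) / b_{n-k}^{α+1}; that is, the function x ↦ f(x) − g(x) tends to 0 as x → +∞. -/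
open Filter Finset

open Matrix

noncomputable def theta (a b : ℤ → ℝ) (n k : ℤ) : ℕ → ℝ
  | α => (a (n - α) - ∑ β ∈ (Finset.range α).attach,
      theta a b n k β * b (n - k - α + β)) / b (n - k)
  decreasing_by exact Finset.mem_range.mp β.2

lemma theta_spec (a b : ℤ → ℝ) (n k : ℤ) (hb : b (n - k) ≠ 0) (α : ℕ) :
    ∑ β ∈ Finset.range (α + 1), theta a b n k β * b (n - k - α + β) = a (n - α) := by
  rw [Finset.sum_range_succ, theta]
  rw [← Finset.sum_attach (Finset.range α)
    (fun β => theta a b n k β * b (n - k - α + β))]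
  have h : (n - k - α + α : ℤ) = n - k := by ring
  rw [h, div_mul_cancel₀ _ hb]
  ring

/-- The `(α+1) × (α+1)` matrix `M_α`: row 0 is `(a_n, a_{n-1}, …, a_{n-α})`, and for
`i ≥ 1` the `(i,j)` entry is `b_{n-k-j+i-1}` if `j ≥ i-1` and `0` otherwise. -/
def asymMatrix (a b : ℤ → ℝ) (n k : ℤ) (α : ℕ) :
    Matrix (Fin (α + 1)) (Fin (α + 1)) ℝ :=
  Matrix.of fun i j =>
    if (i : ℕ) = 0 then a (n - (j : ℕ))
    else if (i : ℕ) ≤ (j : ℕ) + 1 then b (n - k - (j : ℕ) + (i : ℕ) - 1) else 0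

lemma det_asymMatrix (a b : ℤ → ℝ) (n k : ℤ) (hb : b (n - k) ≠ 0) (α : ℕ) :
    (asymMatrix a b n k α).det
      = (-1 : ℝ) ^ α * b (n - k) ^ (α + 1) * theta a b n k α := by
  set A : Matrix (Fin (α + 1)) (Fin (α + 1)) ℝ :=
    Matrix.of (fun i j => if (j : ℕ) ≤ (i : ℕ) then b (n - k - (i : ℕ) + (j : ℕ)) else 0)
    with hA
  set v : Fin (α + 1) → ℝ := fun i => a (n - (i : ℕ)) with hv
  set t : Fin (α + 1) → ℝ := fun j => theta a b n k (j : ℕ) with ht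
  have hAdet : A.det = b (n - k) ^ (α + 1) := by
    rw [Matrix.det_of_lowerTriangular A (by
      intro i j hij
      simp only [hA, Matrix.of_apply]
      rw [if_neg]
      exact fun h => absurd (Fin.le_def.mpr h) (not_le.mpr hij))]
    have : ∀ i : Fin (α + 1), A i i = b (n - k) := by
      intro i
      simp only [hA, Matrix.of_apply, if_pos le_rfl]
      congr 1; ring
    rw [Finset.prod_congr rfl (fun i _ => this i)]
    simp [Finset.card_univ]
  have hmul : A *ᵥ t = v := by
    funext i
    have : (A *ᵥ t) i
        = ∑ j ∈ Finset.range (α + 1),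
            (if j ≤ (i : ℕ) then b (n - k - (i : ℕ) + j) * theta a b n k j else 0) := by
      rw [Matrix.mulVec, dotProduct,
        ← Fin.sum_univ_eq_sum_range (fun j =>
          if j ≤ (i : ℕ) then b (n - k - (i : ℕ) + j) * theta a b n k j else 0)]
      refine Finset.sum_congr rfl (fun j _ => ?_)
      simp only [hA, ht, Matrix.of_apply]
      split_ifs <;> simp
    rw [this]
    rw [← Finset.sum_subset (Finset.range_subset_range.mpr (by omega :
        (i : ℕ) + 1 ≤ α + 1))
      (fun x hx hx2 => by
        rw [if_neg]; intro h; exact hx2 (Finset.mem_range.mpr (by omega)))]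
    rw [Finset.sum_congr rfl (fun x hx => if_pos (by
      have := Finset.mem_range.mp hx; omega))]
    rw [Finset.sum_congr rfl (fun (x : ℕ) _ => mul_comm (b (n - k - (i:ℕ) + x)) (theta a b n k x))]
    exact theta_spec a b n k hb (i : ℕ)
  have hcr : Matrix.cramer A v = A.det • t := by
    rw [Matrix.cramer_eq_adjugate_mulVec, ← hmul, Matrix.mulVec_mulVec,
      Matrix.adjugate_mul, Matrix.smul_mulVec, Matrix.one_mulVec]
  have h2 : (A.updateCol (Fin.last α) v).det = A.det * theta a b n k α := by
    have := congrFun hcr (Fin.last α)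
    rw [Matrix.cramer_apply] at this
    simpa [ht, Fin.val_last] using this
  have h3 : (asymMatrix a b n k α)ᵀ.submatrix id (finRotate (α + 1))
      = A.updateCol (Fin.last α) v := by
    ext j i
    simp only [Matrix.submatrix_apply, Matrix.transpose_apply, id_eq]
    rw [Matrix.updateCol_apply]
    by_cases hi : i = Fin.last α
    · subst hi
      have hrot : finRotate (α + 1) (Fin.last α) = 0 := by
        simp [finRotate_succ_apply]
      rw [hrot, if_pos rfl]
      simp [asymMatrix, hv]
    · have hlt : (i : ℕ) < α := by
        have := Fin.val_lt_last hi
        omega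
      have hrot : ((finRotate (α + 1)) i : ℕ) = (i : ℕ) + 1 := by
        rw [finRotate_succ_apply, Fin.val_add_one_of_lt]
        exact Fin.lt_last_iff_ne_last.mpr hi
      rw [if_neg hi]
      simp only [asymMatrix, hA, Matrix.of_apply, hrot]
      rw [if_neg (by omega)]
      by_cases hij : (i : ℕ) ≤ (j : ℕ)
      · rw [if_pos (by omega), if_pos hij]
        congr 1
        push_cast
        ring
      · rw [if_neg (by omega), if_neg hij]
  have h4 : ((asymMatrix a b n k α)ᵀ.submatrix id (finRotate (α + 1))).det
      = (-1 : ℝ) ^ α * (asymMatrix a b n k α).det := by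
    rw [Matrix.det_permute' (finRotate (α + 1)), Matrix.det_transpose]
    congr 1
    rw [sign_finRotate]
    simp
  have hneg : (-1 : ℝ) ^ α * (-1 : ℝ) ^ α = 1 := by
    rw [← pow_add, Even.neg_one_pow ⟨α, by ring⟩]
  have := h3 ▸ h4
  rw [h2, hAdet] at this
  calc (asymMatrix a b n k α).det
      = (-1:ℝ)^α * ((-1:ℝ)^α * (asymMatrix a b n k α).det) := by
        rw [← mul_assoc, hneg, one_mul]
    _ = (-1:ℝ)^α * (b (n-k) ^ (α+1) * theta a b n k α) := by rw [← this]
    _ = _ := by ring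

lemma coeff_sum_poly (c : ℕ → ℝ) (N m : ℕ) :
    (∑ i ∈ Finset.range (N + 1), Polynomial.C (c i) * Polynomial.X ^ i).coeff m
      = if m ≤ N then c m else 0 := by
  rw [Polynomial.finset_sum_coeff]
  simp only [Polynomial.coeff_C_mul, Polynomial.coeff_X_pow, mul_ite, mul_one, mul_zero]
  rw [Finset.sum_ite_eq (Finset.range (N + 1)) m c]
  simp [Nat.lt_succ_iff]

lemma coeff_GQ (t bb : ℕ → ℝ) (k N m : ℕ) :
    ((∑ α ∈ Finset.range (k + 1), Polynomial.C (t α) * Polynomial.X ^ (k - α)) *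
        (∑ i ∈ Finset.range (N + 1), Polynomial.C (bb i) * Polynomial.X ^ i)).coeff m
      = ∑ α ∈ Finset.range (k + 1),
          (if k - α ≤ m ∧ m - (k - α) ≤ N then t α * bb (m - (k - α)) else 0) := by
  rw [Finset.sum_mul_sum, Polynomial.finset_sum_coeff]
  refine Finset.sum_congr rfl (fun α _ => ?_)
  rw [Polynomial.finset_sum_coeff]
  have hterm : ∀ i : ℕ,
      (Polynomial.C (t α) * Polynomial.X ^ (k - α)) * (Polynomial.C (bb i) * Polynomial.X ^ i)
        = Polynomial.C (t α * bb i) * Polynomial.X ^ (k - α + i) := by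
    intro i; rw [Polynomial.C_mul, pow_add]; ring
  simp only [hterm, Polynomial.coeff_C_mul, Polynomial.coeff_X_pow, mul_ite, mul_one, mul_zero]
  by_cases hc : k - α ≤ m
  · rw [Finset.sum_congr rfl (fun i _ =>
      if_congr (by omega : (m = k - α + i) ↔ (m - (k - α) = i)) rfl rfl)]
    rw [Finset.sum_ite_eq (Finset.range (N + 1)) (m - (k - α)) (fun i => t α * bb i)]
    simp [Nat.lt_succ_iff, hc]
  · rw [Finset.sum_congr rfl (fun i _ => if_neg (by omega : ¬ (m = k - α + i)))]
    simp [hc]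

lemma key_coeff (n k : ℕ) (hnk : k < n) (a b : ℤ → ℝ) (hb : b ((n : ℤ) - k) ≠ 0)
    (hb0 : ∀ m : ℤ, m < 0 → b m = 0) (m : ℕ) (hm : n - k ≤ m) :
    (if m ≤ n then a m else 0)
      = ∑ α ∈ Finset.range (k + 1),
          (if k - α ≤ m ∧ m - (k - α) ≤ n - k
            then theta a b n k α * b ((m - (k - α) : ℕ)) else 0) := by
  by_cases hmn : m ≤ n
  · set α' := n - m with hα'
    have hα'k : α' ≤ k := by omega
    have hrec := theta_spec a b n k hb α'
    have hm' : ((n : ℤ) - α') = m := by omega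
    rw [if_pos hmn, ← hm', ← hrec]
    have step1 : ∑ β ∈ Finset.range (α' + 1),
          theta a b n k β * b ((n : ℤ) - k - α' + β)
        = ∑ β ∈ Finset.range (α' + 1),
            (if k - β ≤ m ∧ m - (k - β) ≤ n - k
              then theta a b n k β * b ((m - (k - β) : ℕ)) else 0) := by
      refine Finset.sum_congr rfl (fun β hβ => ?_)
      have hβ' := Finset.mem_range.mp hβ
      by_cases hc : k - β ≤ m
      · rw [if_pos ⟨hc, by omega⟩]
        congr 2
        omega
      · rw [if_neg (fun h => hc h.1)]
        rw [hb0 ((n : ℤ) - k - α' + β) (by omega), mul_zero]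
    have step2 : ∑ β ∈ Finset.range (α' + 1),
          (if k - β ≤ m ∧ m - (k - β) ≤ n - k
            then theta a b n k β * b ((m - (k - β) : ℕ)) else 0)
        = ∑ β ∈ Finset.range (k + 1),
            (if k - β ≤ m ∧ m - (k - β) ≤ n - k
              then theta a b n k β * b ((m - (k - β) : ℕ)) else 0) := by
      refine Finset.sum_subset (Finset.range_subset_range.mpr (by omega)) (fun β hβ hβ' => ?_)
      have h1 := Finset.mem_range.mp hβ
      have h2 : ¬ β < α' + 1 := fun h => hβ' (Finset.mem_range.mpr h)
      rw [if_neg]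
      intro h
      omega
    rw [step1, step2]
  · rw [if_neg hmn]
    symm
    refine Finset.sum_eq_zero (fun α hα => ?_)
    have := Finset.mem_range.mp hα
    rw [if_neg]
    intro h
    omega

theorem asymptote_formula (n k : ℕ) (hk : 1 ≤ k) (hnk : k < n)
    (a b : ℤ → ℝ) (ha : a n ≠ 0) (hb : b ((n : ℤ) - k) ≠ 0)
    (hb0 : ∀ m : ℤ, m < 0 → b m = 0) :
    Tendsto (fun x : ℝ =>
        (∑ r ∈ Finset.range (n + 1), a r * x ^ r) /
          (∑ i ∈ Finset.range (n - k + 1), b i * x ^ i)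
        - ∑ α ∈ Finset.range (k + 1),
            ((-1 : ℝ) ^ α * (asymMatrix a b n k α).det / b ((n : ℤ) - k) ^ (α + 1))
              * x ^ (k - α))
      atTop (nhds 0) := by
  have hcast : ((n - k : ℕ) : ℤ) = (n : ℤ) - k := by omega
  have hcoef : ∀ α : ℕ,
      (-1 : ℝ) ^ α * (asymMatrix a b n k α).det / b ((n : ℤ) - k) ^ (α + 1)
        = theta a b n k α := by
    intro α
    rw [det_asymMatrix a b n k hb α, div_eq_iff (pow_ne_zero _ hb)]
    have hneg : (-1 : ℝ) ^ α * (-1 : ℝ) ^ α = 1 := by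
      rw [← pow_add, Even.neg_one_pow ⟨α, by ring⟩]
    linear_combination (b ((n : ℤ) - k) ^ (α + 1) * theta a b n k α) * hneg
  set P : Polynomial ℝ := ∑ r ∈ Finset.range (n + 1),
    Polynomial.C (a r) * Polynomial.X ^ r with hP
  set Q : Polynomial ℝ := ∑ i ∈ Finset.range (n - k + 1),
    Polynomial.C (b i) * Polynomial.X ^ i with hQ
  set G : Polynomial ℝ := ∑ α ∈ Finset.range (k + 1),
    Polynomial.C (theta a b n k α) * Polynomial.X ^ (k - α) with hG
  have hQc : Q.coeff (n - k) = b ((n : ℤ) - k) := by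
    rw [hQ, coeff_sum_poly (fun i => b i) (n - k) (n - k), if_pos le_rfl, hcast]
  have hQne : Q ≠ 0 := fun h => hb (by rw [← hQc, h, Polynomial.coeff_zero])
  have hdeg1 : (P - G * Q).degree < ((n - k : ℕ) : WithBot ℕ) := by
    rw [Polynomial.degree_lt_iff_coeff_zero]
    intro m hm
    have hm' : n - k ≤ m := by exact_mod_cast hm
    rw [Polynomial.coeff_sub, hP, hQ, hG,
      coeff_sum_poly (fun r => a r) n m,
      coeff_GQ (fun α => theta a b n k α) (fun i => b i) k (n - k) m,
      key_coeff n k hnk a b hb hb0 m hm', sub_self]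
  have hdeg2 : ((n - k : ℕ) : WithBot ℕ) ≤ Q.degree :=
    Polynomial.le_degree_of_ne_zero (by rw [hQc]; exact hb)
  have hT := Polynomial.div_tendsto_zero_of_degree_lt (P - G * Q) Q
    (lt_of_lt_of_le hdeg1 hdeg2)
  refine hT.congr' ?_
  filter_upwards [Polynomial.eventually_no_roots Q hQne] with x hx
  have hx' : Q.eval x ≠ 0 := hx
  simp only [hcoef]
  have heP : (∑ r ∈ Finset.range (n + 1), a r * x ^ r) = P.eval x := by
    rw [hP, Polynomial.eval_finset_sum]
    simp
  have heQ : (∑ i ∈ Finset.range (n - k + 1), b i * x ^ i) = Q.eval x := by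
    rw [hQ, Polynomial.eval_finset_sum]
    simp
  have heG : (∑ α ∈ Finset.range (k + 1), theta a b n k α * x ^ (k - α)) = G.eval x := by
    rw [hG, Polynomial.eval_finset_sum]
    simp
  rw [heP, heQ, heG, Polynomial.eval_sub, Polynomial.eval_mul]
  field_simp
end

section
/- Let a(x) = a_n x^n + ... + a_0 and b(x) = b_{n-k} x^{n-k} + ... + b_0 be real polynomials with a_n ≠ 0, b_{n-k} ≠ 0, where n > k ≥ 1 are integers (with the convention b_m = 0 for m < 0). Then the quotient q of the Euclidean (polynomial) division of a by b equals Σ_{α=0}^{k} ((-1)^α · det(M_α) / b_{n-k}^{α+1}) x^{k-α}. -/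
open Filter Finset Polynomial

/-- auxiliary matrix: like `asymMatrix` but the last column's indices are shifted by `s`. -/
def auxN (a b : ℤ → ℝ) (n k : ℤ) (s : ℕ) (α : ℕ) :
    Matrix (Fin (α + 1)) (Fin (α + 1)) ℝ :=
  Matrix.of fun i j =>
    if (j : ℕ) = α then
      (if (i : ℕ) = 0 then a (n - α - s) else b (n - k - α - s + (i : ℕ) - 1))
    else
      (if (i : ℕ) = 0 then a (n - (j : ℕ))
       else if (i : ℕ) ≤ (j : ℕ) + 1 then b (n - k - (j : ℕ) + (i : ℕ) - 1) else 0)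

lemma auxN_zero (a b : ℤ → ℝ) (n k : ℤ) (α : ℕ) :
    auxN a b n k 0 α = asymMatrix a b n k α := by
  ext i j
  rcases eq_or_ne (j : ℕ) α with hj | hj
  · have hij : (i : ℕ) ≤ (j : ℕ) + 1 := by omega
    simp [auxN, asymMatrix, hj, hij]
  · simp [auxN, asymMatrix, hj]

lemma auxN_zero_dim (a b : ℤ → ℝ) (n k : ℤ) (s : ℕ) :
    (auxN a b n k s 0).det = a (n - s) := by
  simp [Matrix.det_fin_one, auxN]

lemma auxN_rec (a b : ℤ → ℝ) (n k : ℤ) (s α : ℕ) :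
    (auxN a b n k s (α + 1)).det =
      b (n - k - s - 1) * (auxN a b n k 0 α).det
        - b (n - k) * (auxN a b n k (s + 1) α).det := by
  rw [Matrix.det_succ_row (auxN a b n k s (α+1)) (Fin.last (α+1))]
  rw [Fin.sum_univ_castSucc, Fin.sum_univ_castSucc]
  have h0 : ∀ j : Fin α, ((-1 : ℝ)) ^ ((Fin.last (α+1) : ℕ) + ((j.castSucc.castSucc : Fin (α+2)) : ℕ))
      * (auxN a b n k s (α+1)) (Fin.last (α+1)) j.castSucc.castSucc
      * ((auxN a b n k s (α+1)).submatrix (Fin.last (α+1)).succAbove (j.castSucc.castSucc).succAbove).det = 0 := by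
    intro j
    have : (auxN a b n k s (α+1)) (Fin.last (α+1)) j.castSucc.castSucc = 0 := by
      have h1 : ((j.castSucc.castSucc : Fin (α+2)) : ℕ) = (j : ℕ) := rfl
      have h2 : ((Fin.last (α+1) : Fin (α+2)) : ℕ) = α+1 := rfl
      simp only [auxN, Matrix.of_apply, h1, h2]
      have hj1 : (j:ℕ) ≠ α + 1 := by omega
      have hj2 : ¬ (α + 1 = 0) := by omega
      have hj3 : ¬ (α + 1 ≤ (j:ℕ) + 1) := by omega
      simp [hj1, hj2, hj3]
    rw [this]; ring
  rw [Finset.sum_eq_zero (fun j _ => h0 j), zero_add]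
  have hlast : ((Fin.last (α+1)) : ℕ) = α + 1 := rfl
  have hcast : (((Fin.last α).castSucc : Fin (α+2)) : ℕ) = α := rfl
  have e2 : auxN a b n k s (α+1) (Fin.last (α+1)) (Fin.last (α+1)) = b (n-k-s-1) := by
    simp only [auxN, Matrix.of_apply, hlast, if_pos rfl, if_neg (Nat.succ_ne_zero α)]
    congr 1; push_cast; ring
  have e3 : auxN a b n k s (α+1) (Fin.last (α+1)) (Fin.last α).castSucc = b (n-k) := by
    simp only [auxN, Matrix.of_apply, hlast, hcast]
    rw [if_neg (by omega), if_neg (by omega), if_pos (by omega)]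
    congr 1; push_cast; ring
  have m1 : (auxN a b n k s (α+1)).submatrix (Fin.last (α+1)).succAbove (Fin.last (α+1)).succAbove
      = auxN a b n k 0 α := by
    ext i j
    simp only [Matrix.submatrix_apply, Fin.succAbove_last, auxN, Matrix.of_apply,
      Fin.coe_castSucc]
    rw [if_neg (by omega : ¬ ((j:ℕ) = α + 1))]
    by_cases h : (j:ℕ) = α
    · rw [if_pos h, h]
      by_cases hi : (i:ℕ) = 0
      · rw [if_pos hi, if_pos hi]; congr 1; push_cast; ring
      · rw [if_neg hi, if_neg hi, if_pos (by omega : (i:ℕ) ≤ α + 1)]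
        congr 1; push_cast; ring
    · rw [if_neg h]
  have hsA : ∀ j : Fin (α+1), (((Fin.last α).castSucc.succAbove j : Fin (α+2)) : ℕ)
      = if (j:ℕ) < α then (j:ℕ) else (j:ℕ)+1 := by
    intro j
    rw [Fin.succAbove]
    by_cases h : (j:ℕ) < α
    · rw [if_pos (by simpa [Fin.lt_def] using h), if_pos h]; rfl
    · rw [if_neg (by simpa [Fin.lt_def] using h), if_neg h]; rfl
  have m2 : (auxN a b n k s (α+1)).submatrix (Fin.last (α+1)).succAbove
      ((Fin.last α).castSucc).succAbove = auxN a b n k (s+1) α := by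
    ext i j
    simp only [Matrix.submatrix_apply, Fin.succAbove_last, auxN, Matrix.of_apply,
      Fin.coe_castSucc, hsA]
    by_cases h : (j:ℕ) < α
    · rw [if_pos h]
      rw [if_neg (by omega : ¬ ((j:ℕ) = α + 1)), if_neg (by omega : ¬ ((j:ℕ) = α))]
    · rw [if_neg h]
      have hj : (j:ℕ) = α := by omega
      rw [if_pos (by omega : (j:ℕ)+1 = α+1), if_pos hj]
      by_cases hi : (i:ℕ) = 0
      · rw [if_pos hi, if_pos hi]; congr 1; push_cast; ring
      · rw [if_neg hi, if_neg hi]; congr 1; push_cast; ring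
  rw [e2, e3, m1, m2, hlast, hcast]
  have s1 : ((-1:ℝ)) ^ (α + 1 + α) = -1 := Odd.neg_one_pow ⟨α, by omega⟩
  have s2 : ((-1:ℝ)) ^ (α + 1 + (α + 1)) = 1 := Even.neg_one_pow ⟨α+1, by omega⟩
  rw [s1, s2]
  ring

lemma auxN_det (a b : ℤ → ℝ) (n k : ℤ) :
    ∀ α s, (auxN a b n k s α).det =
      (-(b (n - k))) ^ α * a (n - s - α) +
      ∑ β ∈ Finset.range α,
        (-(b (n - k))) ^ (α - 1 - β) * b (n - k - s - α + β) * (auxN a b n k 0 β).det := by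
  intro α
  induction α with
  | zero =>
    intro s
    rw [auxN_zero_dim]
    simp
  | succ α ih =>
    intro s
    rw [auxN_rec, ih (s+1), Finset.sum_range_succ]
    have hsum : ∑ β ∈ Finset.range α,
        (-(b (n - k))) ^ (α + 1 - 1 - β) * b (n - k - s - (α+1 : ℕ) + β) * (auxN a b n k 0 β).det
        = ∑ β ∈ Finset.range α, (-(b (n - k))) *
            ((-(b (n - k))) ^ (α - 1 - β) * b (n - k - (s+1 : ℕ) - α + β) * (auxN a b n k 0 β).det) := by
      refine Finset.sum_congr rfl fun β hβ => ?_
      have hβα : β < α := Finset.mem_range.mp hβ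
      have he : α + 1 - 1 - β = (α - 1 - β) + 1 := by omega
      have hb : (n - k - (s:ℤ) - ((α:ℕ)+1 : ℕ) + β) = n - k - ((s:ℕ)+1 : ℕ) - α + β := by
        push_cast; ring
      rw [he, pow_succ, hb]; ring
    rw [hsum, ← Finset.mul_sum]
    have ha : a (n - ((s:ℕ)+1 : ℕ) - α) = a (n - s - ((α:ℕ)+1 : ℕ)) := by
      congr 1; push_cast; ring
    have hb2 : b (n - k - s - ((α:ℕ)+1 : ℕ) + α) = b (n - k - s - 1) := by
      congr 1; push_cast; ring
    have he2 : α + 1 - 1 - α = 0 := by omega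
    rw [ha, hb2, he2, pow_zero]
    ring

lemma asym_det (a b : ℤ → ℝ) (n k : ℤ) (α : ℕ) :
    (asymMatrix a b n k α).det =
      (-(b (n - k))) ^ α * a (n - α) +
      ∑ β ∈ Finset.range α,
        (-(b (n - k))) ^ (α - 1 - β) * b (n - k - α + β) * (asymMatrix a b n k β).det := by
  have h := auxN_det a b n k α 0
  simp only [auxN_zero, Nat.cast_zero, sub_zero] at h
  exact h

lemma key' (a b : ℤ → ℝ) (n k : ℤ) (α : ℕ) :
    ∑ β ∈ Finset.range (α+1), (-1:ℝ)^β * (asymMatrix a b n k β).det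
        * (b (n - k))^(α - β) * b (n - k - α + β)
      = a (n - α) * (b (n - k))^(α+1) := by
  rw [Finset.sum_range_succ, asym_det a b n k α]
  have h1 : b (n - k - (α:ℤ) + α) = b (n - k) := by congr 1; ring
  have hαα : α - α = 0 := by omega
  rw [h1, hαα, pow_zero]
  have h2 : (-1:ℝ)^α * (-(b (n-k)))^α = (b (n-k))^α := by
    rw [← mul_pow, neg_one_mul, neg_neg]
  rw [mul_add, add_mul, add_mul, mul_one, mul_one]
  have h3 : (-1:ℝ)^α * ((-(b (n-k)))^α * a (n - α)) * b (n - k)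
      = a (n - α) * b (n-k) ^ (α+1) := by
    rw [← mul_assoc, h2, pow_succ]; ring
  rw [h3]
  have h4 : ∑ β ∈ Finset.range α, (-1:ℝ)^β * (asymMatrix a b n k β).det
        * (b (n - k))^(α - β) * b (n - k - α + β)
      + (-1:ℝ)^α * (∑ β ∈ Finset.range α,
          (-(b (n - k))) ^ (α - 1 - β) * b (n - k - α + β) * (asymMatrix a b n k β).det)
        * b (n - k) = 0 := by
    rw [Finset.mul_sum, Finset.sum_mul, ← Finset.sum_add_distrib]
    refine Finset.sum_eq_zero fun β hβ => ?_
    have hβα : β < α := Finset.mem_range.mp hβ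
    have e1 : (-(b (n-k)) : ℝ)^(α-1-β) = (-1)^(α-1-β) * (b (n-k))^(α-1-β) := by
      rw [neg_pow]
    have e2 : (-1:ℝ)^α * (-1)^(α-1-β) = -(-1)^β := by
      rw [← pow_add, show α + (α-1-β) = 2*(α-1-β) + (β+1) from by omega, pow_add, pow_mul,
        neg_one_sq, one_pow, pow_succ]
      ring
    rw [show α - β = (α-1-β)+1 from by omega, pow_succ, e1]
    linear_combination ((asymMatrix a b n k β).det * (b (n-k))^(α-1-β) * b (n-k) *
      b (n - k - α + β)) * e2
  linear_combination h4

lemma key (a b : ℤ → ℝ) (n k : ℤ) (hc : b (n - k) ≠ 0) (α : ℕ) :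
    ∑ β ∈ Finset.range (α+1), (-1:ℝ)^β * (asymMatrix a b n k β).det
        / (b (n - k))^(β+1) * b (n - k - α + β)
      = a (n - α) := by
  have expand : ∀ β ∈ Finset.range (α+1),
      (-1:ℝ)^β * (asymMatrix a b n k β).det / (b (n - k))^(β+1) * b (n - k - α + β)
      = ((-1:ℝ)^β * (asymMatrix a b n k β).det * (b (n - k))^(α-β) * b (n - k - α + β))
          / (b (n - k))^(α+1) := by
    intro β hβ
    have hβα : β ≤ α := by have := Finset.mem_range.mp hβ; omega
    rw [div_mul_eq_mul_div, div_eq_div_iff (pow_ne_zero _ hc) (pow_ne_zero _ hc),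
      show α + 1 = (β+1) + (α-β) from by omega, pow_add]
    ring
  rw [Finset.sum_congr rfl expand, ← Finset.sum_div, key' a b n k α,
    mul_div_cancel_right₀ _ (pow_ne_zero _ hc)]

lemma coeff_mysum (f : ℕ → ℝ) (N m : ℕ) :
    (∑ i ∈ Finset.range N, C (f i) * X ^ i).coeff m = if m < N then f m else 0 := by
  rw [Polynomial.finset_sum_coeff]
  simp only [Polynomial.coeff_C_mul, Polynomial.coeff_X_pow]
  rcases lt_or_ge m N with h | h
  · rw [if_pos h, Finset.sum_eq_single m]
    · simp
    · intro i _ hi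
      rw [if_neg (fun hh => hi hh.symm), mul_zero]
    · intro hm; exact absurd (Finset.mem_range.mpr h) hm
  · rw [if_neg (by omega)]
    refine Finset.sum_eq_zero fun i hi => ?_
    have : i < N := Finset.mem_range.mp hi
    rw [if_neg (by omega), mul_zero]

lemma poly_div_helper (p d q r : ℝ[X]) (hd : d ≠ 0) (h : p = d * q + r)
    (hr : r.degree < d.degree) : p / d = q := by
  have hlc : d.leadingCoeff ≠ 0 := Polynomial.leadingCoeff_ne_zero.mpr hd
  have hm := Polynomial.monic_mul_leadingCoeff_inv hd
  have hC : (C d.leadingCoeff⁻¹ : ℝ[X]) * C d.leadingCoeff = 1 := by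
    rw [← Polynomial.C_mul, inv_mul_cancel₀ hlc, Polynomial.C_1]
  have h1 : p /ₘ (d * C d.leadingCoeff⁻¹) = C d.leadingCoeff * q := by
    refine (Polynomial.div_modByMonic_unique (C d.leadingCoeff * q) r hm ⟨?_, ?_⟩).1
    · calc r + d * C d.leadingCoeff⁻¹ * (C d.leadingCoeff * q)
          = r + d * q * (C d.leadingCoeff⁻¹ * C d.leadingCoeff) := by ring
        _ = p := by rw [hC, mul_one, h]; ring
    · rwa [Polynomial.degree_mul_leadingCoeff_inv d hd]
  rw [Polynomial.div_def, h1, ← mul_assoc, hC, one_mul]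


theorem euclidean_quotient_eq_det_formula (n k : ℕ) (hk : 1 ≤ k) (hnk : k < n)
    (a b : ℤ → ℝ) (ha : a n ≠ 0) (hb : b ((n : ℤ) - k) ≠ 0)
    (hb0 : ∀ m : ℤ, m < 0 → b m = 0) :
    (∑ r ∈ Finset.range (n + 1), C (a r) * X ^ r) /
        (∑ i ∈ Finset.range (n - k + 1), C (b i) * X ^ i) =
      ∑ α ∈ Finset.range (k + 1),
        C ((-1 : ℝ) ^ α * (asymMatrix a b n k α).det / b ((n : ℤ) - k) ^ (α + 1))
          * X ^ (k - α) := by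
  set d : ℕ := n - k with hd
  have hdk : d + k = n := by omega
  set qv : ℕ → ℝ := fun α =>
    (-1 : ℝ) ^ α * (asymMatrix a b n k α).det / b ((n : ℤ) - k) ^ (α + 1) with hqv
  set A : ℝ[X] := ∑ r ∈ Finset.range (n + 1), C (a r) * X ^ r with hA
  set B : ℝ[X] := ∑ i ∈ Finset.range (d + 1), C (b i) * X ^ i with hB
  set Q : ℝ[X] := ∑ α ∈ Finset.range (k + 1), C (qv α) * X ^ (k - α) with hQ
  have hcastd : ((d : ℕ) : ℤ) = (n : ℤ) - k := by omega
  have hBd : B.coeff d = b ((n : ℤ) - k) := by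
    rw [hB, coeff_mysum (fun i => b i) (d+1) d, if_pos (by omega), hcastd]
  have hBne : B ≠ 0 := fun h => hb (by rw [← hBd, h, Polynomial.coeff_zero])
  have hdegB : B.degree ≤ (d : ℕ) := by
    refine le_trans (Polynomial.degree_sum_le _ _) (Finset.sup_le fun i hi => ?_)
    have hi' : i ≤ d := by have := Finset.mem_range.mp hi; omega
    exact le_trans (Polynomial.degree_C_mul_X_pow_le i (b i)) (by exact_mod_cast hi')
  have hdegQ : Q.degree ≤ (k : ℕ) := by
    refine le_trans (Polynomial.degree_sum_le _ _) (Finset.sup_le fun α hα => ?_)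
    have hα' : k - α ≤ k := Nat.sub_le _ _
    exact le_trans (Polynomial.degree_C_mul_X_pow_le _ _) (by exact_mod_cast hα')
  have hterm : ∀ (i j : ℕ) (x y : ℝ) (m : ℕ),
      ((C x * X ^ i) * (C y * X ^ j)).coeff m = if m = i + j then x * y else 0 := by
    intro i j x y m
    rw [mul_mul_mul_comm, ← C_mul, ← pow_add, Polynomial.coeff_C_mul, Polynomial.coeff_X_pow]
    split_ifs <;> simp
  have hcoeff : ∀ m : ℕ, d ≤ m → (B * Q).coeff m = A.coeff m := by
    intro m hm
    rcases le_or_gt m n with hmn | hmn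
    · -- main range
      set α₀ : ℕ := n - m with hα₀
      have hα₀k : α₀ ≤ k := by omega
      have hBQ : (B * Q).coeff m
          = ∑ α ∈ Finset.range (α₀ + 1),
              (-1 : ℝ) ^ α * (asymMatrix a b n k α).det / b ((n : ℤ) - k) ^ (α + 1)
                * b ((n : ℤ) - k - α₀ + α) := by
        rw [hB, hQ, Finset.sum_mul_sum]
        rw [Polynomial.finset_sum_coeff]
        simp only [Polynomial.finset_sum_coeff, hterm]
        rw [Finset.sum_comm]
        have hinner : ∀ α ∈ Finset.range (k + 1),
            (∑ i ∈ Finset.range (d + 1), if m = i + (k - α) then b i * qv α else 0)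
            = if k - α ≤ m ∧ m - (k - α) ≤ d then b ((m - (k - α) : ℕ)) * qv α else 0 := by
          intro α hα
          by_cases hc : k - α ≤ m ∧ m - (k - α) ≤ d
          · rw [if_pos hc]
            rw [Finset.sum_eq_single_of_mem (m - (k - α))
              (Finset.mem_range.mpr (by omega))
              (fun i _ hi => if_neg (by omega))]
            rw [if_pos (by omega)]
          · rw [if_neg hc]
            exact Finset.sum_eq_zero fun i hi => if_neg
              (by have := Finset.mem_range.mp hi; omega)
        rw [Finset.sum_congr rfl hinner]
        rw [← Finset.sum_subset
          (Finset.range_subset_range.mpr (by omega : α₀ + 1 ≤ k + 1))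
          (fun α hα hα' => by
            rw [if_neg]
            have h1 := Finset.mem_range.mp hα
            have h2 : ¬ α < α₀ + 1 := fun h => hα' (Finset.mem_range.mpr h)
            omega)]
        refine Finset.sum_congr rfl fun α hα => ?_
        have hαα₀ : α ≤ α₀ := by have := Finset.mem_range.mp hα; omega
        by_cases hc : k - α ≤ m ∧ m - (k - α) ≤ d
        · rw [if_pos hc]
          have hcast : (((m - (k - α) : ℕ)) : ℤ) = (n : ℤ) - k - α₀ + α := by omega
          rw [hcast, mul_comm]
        · rw [if_neg hc]
          have hneg : ((n : ℤ) - k - α₀ + α) < 0 := by omega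
          rw [hb0 _ hneg, mul_zero]
      rw [hBQ, key a b n k hb α₀]
      rw [hA, coeff_mysum (fun r => a r) (n + 1) m, if_pos (by omega)]
      congr 1
      omega
    · -- m > n : both sides zero
      have h1 : A.coeff m = 0 := by
        rw [hA, coeff_mysum (fun r => a r) (n + 1) m, if_neg (by omega)]
      have h2 : (B * Q).coeff m = 0 := by
        apply Polynomial.coeff_eq_zero_of_degree_lt
        refine lt_of_le_of_lt (le_trans (Polynomial.degree_mul_le _ _)
          (add_le_add hdegB hdegQ)) ?_
        rw [← Nat.cast_add, hdk]
        exact_mod_cast Nat.cast_lt.mpr hmn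
      rw [h1, h2]
  have hAeq : A = B * Q + (A - B * Q) := by ring
  have hdegR : (A - B * Q).degree < B.degree := by
    refine lt_of_lt_of_le ?_ (Polynomial.le_degree_of_ne_zero (by rw [hBd]; exact hb))
    rw [Polynomial.degree_lt_iff_coeff_zero]
    intro m hm
    have hdm : d ≤ m := by exact_mod_cast Nat.cast_le.mp hm
    rw [Polynomial.coeff_sub, hcoeff m hdm, sub_self]
  exact poly_div_helper A B Q (A - B * Q) hBne hAeq hdegR
end

section
/- Let a(x) = a_n x^n + ... + a_0 and b(x) = b_{n-k} x^{n-k} + ... + b_0 be real polynomials with a_n ≠ 0, b_{n-k} ≠ 0, where n > k ≥ 1 are integers (with the convention b_m = 0 for m < 0), and let f(x) = a(x)/b(x). Then lim_{x→+∞} (f(x)/x^{k-1} − (a_n/b_{n-k})·x) = (a_{n-1} b_{n-k} − a_n b_{n-k-1}) / b_{n-k}^2. Consequently, the coefficient of x^{k-1} in the asymptote of f is θ_1 = −det([[a_n, a_{n-1}], [b_{n-k}, b_{n-k-1}]]) / b_{n-k}^2. -/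
open Filter Finset Polynomial

private lemma coeff_sum_C_mul_X_pow (f : ℕ → ℝ) (t j : ℕ) :
    (∑ r ∈ Finset.range t, Polynomial.C (f r) * Polynomial.X ^ r).coeff j =
      if j < t then f j else 0 := by
  rw [Polynomial.finset_sum_coeff]
  simp [Polynomial.coeff_C_mul, Polynomial.coeff_X_pow]

private lemma eval_sum_C_mul_X_pow (f : ℕ → ℝ) (t : ℕ) (x : ℝ) :
    (∑ r ∈ Finset.range t, Polynomial.C (f r) * Polynomial.X ^ r).eval x =
      ∑ r ∈ Finset.range t, f r * x ^ r := by
  simp [Polynomial.eval_finset_sum]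

private lemma degree_sum_C_mul_X_pow_le (f : ℕ → ℝ) (t d : ℕ) (hd : t ≤ d + 1) :
    (∑ r ∈ Finset.range t, Polynomial.C (f r) * Polynomial.X ^ r).degree ≤ (d : WithBot ℕ) := by
  refine (Polynomial.degree_sum_le _ _).trans (Finset.sup_le fun r hr => ?_)
  refine (Polynomial.degree_C_mul_X_pow_le r (f r)).trans ?_
  exact_mod_cast (by simp at hr; omega : r ≤ d)

private lemma aux_div_tendsto (P Q : Polynomial ℝ) (d : ℕ) (hQd : Q.degree = d)
    (hPd : P.degree ≤ d) :
    Tendsto (fun x => P.eval x / Q.eval x) atTop (nhds (P.coeff d / Q.leadingCoeff)) := by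
  rcases lt_or_eq_of_le hPd with h | h
  · rw [Polynomial.coeff_eq_zero_of_degree_lt h, zero_div]
    exact Polynomial.div_tendsto_zero_of_degree_lt P Q (h.trans_le hQd.ge)
  · have hnd : P.natDegree = d := Polynomial.natDegree_eq_of_degree_eq_some h
    rw [show P.coeff d = P.leadingCoeff by rw [Polynomial.leadingCoeff, hnd]]
    exact Polynomial.div_tendsto_leadingCoeff_div_of_degree_eq P Q (h.trans hQd.symm)

private lemma asymptote_unique_coeff (k : ℕ) (f : ℝ → ℝ) (c L : ℝ)
    (h1 : Tendsto (fun x => f x / x ^ k - c * x) atTop (nhds L))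
    (θ : ℕ → ℝ)
    (hθ : Tendsto (fun x => f x - ∑ α ∈ Finset.range (k + 2), θ α * x ^ (k + 1 - α))
      atTop (nhds 0)) :
    θ 1 = L := by
  have h2 : Tendsto
      (fun x : ℝ => (f x - ∑ α ∈ Finset.range (k + 2), θ α * x ^ (k + 1 - α)) / x ^ k)
      atTop (nhds 0) := by
    refine squeeze_zero_norm' ?_ (by simpa using hθ.norm)
    filter_upwards [eventually_ge_atTop (1 : ℝ)] with x hx
    rw [norm_div]
    refine div_le_self (norm_nonneg _) ?_
    have h1x : (1 : ℝ) ≤ x ^ k := one_le_pow₀ hx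
    rw [Real.norm_eq_abs, abs_of_nonneg (by linarith)]
    exact h1x
  have h4 : Tendsto
      (fun x : ℝ => (∑ i ∈ Finset.range k, θ (i + 2) * x ^ (k - 1 - i)) / x ^ k)
      atTop (nhds 0) := by
    simp only [Finset.sum_div, mul_div_assoc]
    rw [show (0 : ℝ) = ∑ i ∈ Finset.range k, θ (i + 2) * 0 from by simp]
    refine tendsto_finset_sum _ fun i hi => Tendsto.const_mul _ ?_
    exact tendsto_pow_div_pow_atTop_zero (by simp at hi; omega)
  have h5 : Tendsto (fun x : ℝ => f x / x ^ k - θ 0 * x - θ 1) atTop (nhds (0 + 0)) := by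
    refine Tendsto.congr' ?_ (h2.add h4)
    filter_upwards [eventually_ge_atTop (1 : ℝ)] with x hx
    have hx0 : x ≠ 0 := by intro h; rw [h] at hx; linarith
    have hS : (∑ α ∈ Finset.range (k + 2), θ α * x ^ (k + 1 - α)) =
        θ 0 * x ^ (k + 1) + θ 1 * x ^ k + ∑ i ∈ Finset.range k, θ (i + 2) * x ^ (k - 1 - i) := by
      rw [Finset.sum_range_succ' _ (k + 1), Finset.sum_range_succ' _ k]
      have h1' : ∀ i ∈ Finset.range k,
          θ (i + 1 + 1) * x ^ (k + 1 - (i + 1 + 1)) = θ (i + 2) * x ^ (k - 1 - i) := by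
        intro i hi
        rw [show i + 1 + 1 = i + 2 from by omega, show k + 1 - (i + 2) = k - 1 - i from by omega]
      rw [Finset.sum_congr rfl h1']
      norm_num
      ring
    rw [hS, ← add_div]
    field_simp
    ring
  have h6 : Tendsto (fun x : ℝ => (θ 0 - c) * x + θ 1) atTop (nhds (L - (0 + 0))) := by
    refine Tendsto.congr (fun x => by ring) (h1.sub h5)
  have h7 : θ 0 = c := by
    by_contra hne
    have hd : θ 0 - c ≠ 0 := sub_ne_zero.mpr hne
    have hx : Tendsto (fun x : ℝ => x) atTop (nhds ((L - (0 + 0) - θ 1) / (θ 0 - c))) := by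
      refine Tendsto.congr (fun x => ?_) ((h6.sub tendsto_const_nhds).div_const (θ 0 - c))
      field_simp
      ring
    exact not_tendsto_nhds_of_tendsto_atTop tendsto_id _ hx
  rw [h7] at h6
  have h8 : Tendsto (fun _ : ℝ => θ 1) atTop (nhds (L - (0 + 0))) := by
    refine Tendsto.congr (fun x => by ring) h6
  have := tendsto_nhds_unique h8 tendsto_const_nhds
  linarith

theorem second_asymptote_coeff (n k : ℕ) (hk : 1 ≤ k) (hnk : k < n)
    (a b : ℤ → ℝ) (ha : a n ≠ 0) (hb : b ((n : ℤ) - k) ≠ 0)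
    (hb0 : ∀ m : ℤ, m < 0 → b m = 0) :
    Tendsto (fun x : ℝ =>
        ((∑ r ∈ Finset.range (n + 1), a r * x ^ r) /
          (∑ i ∈ Finset.range (n - k + 1), b i * x ^ i)) / x ^ (k - 1)
        - (a n / b ((n : ℤ) - k)) * x)
      atTop
      (nhds ((a ((n : ℤ) - 1) * b ((n : ℤ) - k) - a n * b ((n : ℤ) - k - 1)) /
        b ((n : ℤ) - k) ^ 2)) ∧
    ∀ θ : ℕ → ℝ,
      Tendsto (fun x : ℝ =>
          (∑ r ∈ Finset.range (n + 1), a r * x ^ r) /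
            (∑ i ∈ Finset.range (n - k + 1), b i * x ^ i)
          - ∑ α ∈ Finset.range (k + 1), θ α * x ^ (k - α))
        atTop (nhds 0) →
      θ 1 = -((a n * b ((n : ℤ) - k - 1) - a ((n : ℤ) - 1) * b ((n : ℤ) - k)) /
        b ((n : ℤ) - k) ^ 2) := by
  obtain ⟨k, rfl⟩ : ∃ k', k = k' + 1 := ⟨k - 1, by omega⟩
  obtain ⟨m, rfl⟩ : ∃ m, n = k + m + 2 := ⟨n - k - 2, by omega⟩
  have e1 : k + m + 2 + 1 = k + m + 3 := by omega
  have e2 : k + m + 2 - (k + 1) + 1 = m + 2 := by omega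
  have e3 : k + 1 - 1 = k := by omega
  have e4 : ((k + m + 2 : ℕ) : ℤ) - ((k + 1 : ℕ) : ℤ) = ((m + 1 : ℕ) : ℤ) := by push_cast; ring
  have e5 : ((k + m + 2 : ℕ) : ℤ) - 1 = ((k + m + 1 : ℕ) : ℤ) := by push_cast; ring
  have e6 : ((m + 1 : ℕ) : ℤ) - 1 = ((m : ℕ) : ℤ) := by push_cast; ring
  rw [e4] at hb
  simp only [e1, e2, e3, e4, e5, e6]
  set c : ℝ := a ((k + m + 2 : ℕ) : ℤ) / b ((m + 1 : ℕ) : ℤ) with hc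
  -- the polynomials
  set P : Polynomial ℝ := ∑ r ∈ Finset.range (k + m + 3), Polynomial.C (a r) * Polynomial.X ^ r
    with hP
  set Q : Polynomial ℝ := ∑ i ∈ Finset.range (m + 2), Polynomial.C (b i) * Polynomial.X ^ i
    with hQ
  set N : Polynomial ℝ := ∑ r ∈ Finset.range (k + m + 2),
    Polynomial.C (a r - c * b ((r : ℤ) - ((k : ℤ) + 1))) * Polynomial.X ^ r with hN
  have hQdeg : Q.degree = ((m + 1 : ℕ) : WithBot ℕ) := by
    refine Polynomial.degree_eq_of_le_of_coeff_ne_zero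
      (degree_sum_C_mul_X_pow_le _ _ _ (by omega)) ?_
    rw [hQ, coeff_sum_C_mul_X_pow]
    simpa using hb
  have hQ0 : Q ≠ 0 := by
    intro h
    rw [h, Polynomial.degree_zero] at hQdeg
    exact absurd hQdeg.symm (by simp)
  have hQnat : Q.natDegree = m + 1 := Polynomial.natDegree_eq_of_degree_eq_some hQdeg
  have hQlc : Q.leadingCoeff = b ((m + 1 : ℕ) : ℤ) := by
    rw [Polynomial.leadingCoeff, hQnat, hQ, coeff_sum_C_mul_X_pow]
    simp
  have hDdeg : (Polynomial.X ^ k * Q).degree = ((k + m + 1 : ℕ) : WithBot ℕ) := by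
    rw [Polynomial.degree_mul, Polynomial.degree_X_pow, hQdeg]
    norm_cast
  have hDlc : (Polynomial.X ^ k * Q).leadingCoeff = b ((m + 1 : ℕ) : ℤ) := by
    rw [Polynomial.leadingCoeff_mul, Polynomial.leadingCoeff_X_pow, one_mul, hQlc]
  have hNdeg : N.degree ≤ ((k + m + 1 : ℕ) : WithBot ℕ) :=
    degree_sum_C_mul_X_pow_le _ _ _ (by omega)
  have hNcoeff : N.coeff (k + m + 1) = a ((k + m + 1 : ℕ) : ℤ) - c * b ((m : ℕ) : ℤ) := by
    rw [hN, coeff_sum_C_mul_X_pow, if_pos (by omega)]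
    congr 2
    push_cast
    ring
  have htend := aux_div_tendsto N (Polynomial.X ^ k * Q) (k + m + 1) hDdeg hNdeg
  rw [hNcoeff, hDlc] at htend
  -- the key algebraic identity
  have key : ∀ x : ℝ, N.eval x =
      (∑ r ∈ Finset.range (k + m + 3), a r * x ^ r)
        - c * x ^ (k + 1) * (∑ i ∈ Finset.range (m + 2), b i * x ^ i) := by
    intro x
    rw [hN, eval_sum_C_mul_X_pow]
    have hsub : ∀ r : ℕ, (a r - c * b ((r : ℤ) - ((k : ℤ) + 1))) * x ^ r
        = a r * x ^ r - c * b ((r : ℤ) - ((k : ℤ) + 1)) * x ^ r := fun r => by ring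
    rw [Finset.sum_congr rfl fun r _ => hsub r, Finset.sum_sub_distrib]
    have hA : (∑ r ∈ Finset.range (k + m + 3), a r * x ^ r) =
        (∑ r ∈ Finset.range (k + m + 2), a r * x ^ r)
          + a ((k + m + 2 : ℕ) : ℤ) * x ^ (k + m + 2) := by
      rw [show k + m + 3 = k + m + 2 + 1 from by omega]
      exact Finset.sum_range_succ _ _
    have hB : ∑ r ∈ Finset.range (k + m + 2), c * b ((r : ℤ) - ((k : ℤ) + 1)) * x ^ r
        = ∑ i ∈ Finset.range (m + 1), c * b ((i : ℕ) : ℤ) * x ^ (k + 1 + i) := by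
      rw [show k + m + 2 = (k + 1) + (m + 1) from by omega, Finset.sum_range_add]
      have h0 : ∑ r ∈ Finset.range (k + 1), c * b ((r : ℤ) - ((k : ℤ) + 1)) * x ^ r = 0 := by
        refine Finset.sum_eq_zero fun r hr => ?_
        rw [hb0 _ (by simp at hr; push_cast; omega), mul_zero, zero_mul]
      rw [h0, zero_add]
      refine Finset.sum_congr rfl fun i hi => ?_
      congr 2
      push_cast
      ring
    rw [hB, hA]
    have hC : c * x ^ (k + 1) * (∑ i ∈ Finset.range (m + 2), b i * x ^ i)
        = (∑ i ∈ Finset.range (m + 1), c * b ((i : ℕ) : ℤ) * x ^ (k + 1 + i))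
          + c * b ((m + 1 : ℕ) : ℤ) * x ^ (k + m + 2) := by
      rw [show m + 2 = (m + 1) + 1 from by omega, Finset.sum_range_succ, mul_add,
        Finset.mul_sum]
      congr 1
      · refine Finset.sum_congr rfl fun i hi => ?_
        ring
      · ring
    rw [hC]
    have hcb : c * b ((m + 1 : ℕ) : ℤ) = a ((k + m + 2 : ℕ) : ℤ) := by
      rw [hc, div_mul_cancel₀ _ hb]
    rw [← hcb]
    ring
  -- eventual equality
  have hev : ∀ᶠ x : ℝ in atTop, Q.eval x ≠ 0 := by
    have h1 := Polynomial.abs_tendsto_atTop Q (by rw [hQdeg]; exact_mod_cast Nat.succ_pos m)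
    filter_upwards [h1.eventually_ge_atTop 1] with x hx
    intro h
    rw [h] at hx
    simp only [abs_zero] at hx
    linarith
  have heq : (fun x : ℝ =>
      ((∑ r ∈ Finset.range (k + m + 3), a r * x ^ r) /
          (∑ i ∈ Finset.range (m + 2), b i * x ^ i)) / x ^ k - c * x)
        =ᶠ[atTop] (fun x : ℝ => N.eval x / (Polynomial.X ^ k * Q).eval x) := by
    filter_upwards [hev, eventually_ge_atTop (1 : ℝ)] with x hQx hx1
    have hx0 : x ≠ 0 := by intro h; rw [h] at hx1; linarith
    have hQev : Q.eval x = ∑ i ∈ Finset.range (m + 2), b i * x ^ i := by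
      rw [hQ, eval_sum_C_mul_X_pow]
    rw [Polynomial.eval_mul, Polynomial.eval_pow, Polynomial.eval_X, key x, ← hQev]
    field_simp
    ring
  have part1 : Tendsto (fun x : ℝ =>
      ((∑ r ∈ Finset.range (k + m + 3), a r * x ^ r) /
        (∑ i ∈ Finset.range (m + 2), b i * x ^ i)) / x ^ k - c * x) atTop
      (nhds ((a ((k + m + 1 : ℕ) : ℤ) - c * b ((m : ℕ) : ℤ)) / b ((m + 1 : ℕ) : ℤ))) :=
    Tendsto.congr' heq.symm htend
  have hval : (a ((k + m + 1 : ℕ) : ℤ) - c * b ((m : ℕ) : ℤ)) / b ((m + 1 : ℕ) : ℤ)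
      = (a ((k + m + 1 : ℕ) : ℤ) * b ((m + 1 : ℕ) : ℤ)
          - a ((k + m + 2 : ℕ) : ℤ) * b ((m : ℕ) : ℤ)) / b ((m + 1 : ℕ) : ℤ) ^ 2 := by
    have hgen : ∀ A1 A2 Bm β : ℝ, β ≠ 0 →
        (A1 - A2 / β * Bm) / β = (A1 * β - A2 * Bm) / β ^ 2 := by
      intro A1 A2 Bm β hβ
      field_simp
    rw [hc]
    exact hgen _ _ _ _ hb
  rw [hval] at part1
  refine ⟨part1, fun θ hθ => ?_⟩
  have := asymptote_unique_coeff k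
    (fun x : ℝ => (∑ r ∈ Finset.range (k + m + 3), a r * x ^ r) /
      (∑ i ∈ Finset.range (m + 2), b i * x ^ i)) c _ part1 θ hθ
  rw [this, ← neg_div, neg_sub]
end

section
/- Let a(x) = a_n x^n + ... + a_0 and b(x) = b_{n-k} x^{n-k} + ... + b_0 be real polynomials with a_n ≠ 0, b_{n-k} ≠ 0, where n > k ≥ 1 are integers (with the convention b_m = 0 for m < 0), let f(x) = a(x)/b(x), and let θ_α = (-1)^α · det(M_α) / b_{n-k}^{α+1} for 0 ≤ α ≤ k. Then for every integer φ with 1 ≤ φ ≤ k, θ_φ = lim_{x→+∞} ( f(x)/x^{k-φ} − Σ_{α=0}^{φ-1} θ_α x^{φ-α} ). -/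
open Filter Finset

lemma det_updateRow_sub_sum {m : ℕ} (M : Matrix (Fin (m+1)) (Fin (m+1)) ℝ) (c : Fin m → ℝ)
    (s : Finset (Fin m)) :
    (M.updateRow 0 (M 0 - ∑ i ∈ s, c i • M i.succ)).det = M.det := by
  induction s using Finset.induction_on with
  | empty => simp
  | insert _ _ ha ih =>
    rename_i x s'
    rw [Finset.sum_insert ha]
    have : M 0 - (c x • M x.succ + ∑ i ∈ s', c i • M i.succ)
        = (M 0 - ∑ i ∈ s', c i • M i.succ) + (-(c x)) • M x.succ := by
      module
    rw [this, Matrix.det_updateRow_add, Matrix.det_updateRow_smul, ih]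
    have hz : (M.updateRow 0 (M x.succ)).det = 0 := by
      apply Matrix.det_zero_of_row_eq (i := 0) (j := x.succ) (Fin.succ_ne_zero x).symm
      rw [Matrix.updateRow_self, Matrix.updateRow_ne (Fin.succ_ne_zero x)]
    rw [hz]
    ring

lemma asym_rec (n k : ℕ) (hnk : k < n) (a b : ℤ → ℝ) (hb : b ((n : ℤ) - k) ≠ 0)
    (θ : ℕ → ℝ)
    (hθ : ∀ α : ℕ, α ≤ k →
      θ α = (-1 : ℝ) ^ α * (asymMatrix a b n k α).det / b ((n : ℤ) - k) ^ (α + 1)) :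
    ∀ α : ℕ, α ≤ k →
      a ((n : ℤ) - α) = ∑ β ∈ Finset.range (α + 1), θ β * b ((n : ℤ) - k - α + β) := by
  intro α
  induction α using Nat.strong_induction_on with
  | _ α ih =>
  intro hαk
  set M := asymMatrix a b n k α with hM
  set v : Fin (α+1) → ℝ := M 0 - ∑ i : Fin α, θ i • M i.succ with hv
  -- entries of M
  have hM0 : ∀ j : Fin (α+1), M 0 j = a ((n:ℤ) - (j:ℕ)) := by
    intro j; simp [hM, asymMatrix]
  have hMs : ∀ (i : Fin α) (j : Fin (α+1)), M i.succ j =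
      if (i:ℕ) ≤ (j:ℕ) then b ((n:ℤ) - k - (j:ℕ) + (i:ℕ)) else 0 := by
    intro i j
    have h1 : ((i.succ : Fin (α+1)) : ℕ) = (i:ℕ) + 1 := rfl
    simp only [hM, asymMatrix, Matrix.of_apply, h1]
    rw [if_neg (by omega)]
    congr 1
    · simp [Nat.add_le_add_iff_right]
    · push_cast; ring
  -- value of v
  have hvval : ∀ j : Fin (α+1), v j =
      a ((n:ℤ) - (j:ℕ)) - ∑ β ∈ Finset.range α,
        θ β * (if β ≤ (j:ℕ) then b ((n:ℤ) - k - (j:ℕ) + β) else 0) := by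
    intro j
    simp only [hv, Pi.sub_apply, Finset.sum_apply, Pi.smul_apply, smul_eq_mul, hM0]
    congr 1
    rw [← Fin.sum_univ_eq_sum_range
      (fun β => θ β * (if β ≤ (j:ℕ) then b ((n:ℤ) - k - (j:ℕ) + β) else 0)) α]
    exact Finset.sum_congr rfl fun i _ => by rw [hMs]
  -- v vanishes below the last row
  have hvz : ∀ j : Fin (α+1), (j:ℕ) < α → v j = 0 := by
    intro j hj
    rw [hvval]
    have hsub : ∑ β ∈ Finset.range α,
        θ β * (if β ≤ (j:ℕ) then b ((n:ℤ) - k - (j:ℕ) + β) else 0)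
        = ∑ β ∈ Finset.range ((j:ℕ)+1), θ β * b ((n:ℤ) - k - (j:ℕ) + β) := by
      rw [← Finset.sum_subset (Finset.range_subset_range.2 (show (j:ℕ)+1 ≤ α by omega))
        (fun β _ hβ => by rw [if_neg (by simp at hβ; omega), mul_zero])]
      exact Finset.sum_congr rfl fun β hβ => by
        rw [if_pos (by simp at hβ; omega)]
    rw [hsub, ← ih (j:ℕ) hj (by omega), sub_self]
  -- the triangular submatrix
  have hT : (M.submatrix Fin.succ Fin.castSucc).det = b ((n:ℤ) - k) ^ α := by
    have htri : (M.submatrix Fin.succ Fin.castSucc).BlockTriangular id := by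
      intro i j hij
      simp only [Matrix.submatrix_apply]
      have hji : (j:ℕ) < (i:ℕ) := hij
      rw [hMs, if_neg (by simp only [Fin.coe_castSucc]; omega)]
    rw [Matrix.det_of_upperTriangular htri]
    have : ∀ i : Fin α, (M.submatrix Fin.succ Fin.castSucc) i i = b ((n:ℤ) - k) := by
      intro i
      simp only [Matrix.submatrix_apply]
      rw [hMs, if_pos (by simp)]
      norm_num
    rw [Finset.prod_congr rfl fun i _ => this i]
    simp
  -- Laplace expansion of the updated matrix along row 0
  have hexp : M.det = (-1:ℝ)^α * v (Fin.last α) * b ((n:ℤ) - k) ^ α := by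
    have h1 := det_updateRow_sub_sum M (fun i => θ i) Finset.univ
    rw [← hv] at h1
    rw [← h1, Matrix.det_succ_row_zero]
    rw [Finset.sum_eq_single (Fin.last α)]
    · rw [Matrix.updateRow_self]
      have hsub : (Matrix.updateRow M 0 v).submatrix Fin.succ (Fin.last α).succAbove
          = M.submatrix Fin.succ Fin.castSucc := by
        rw [Fin.succAbove_last]
        ext r c
        simp only [Matrix.submatrix_apply]
        rw [Matrix.updateRow_ne (Fin.succ_ne_zero r)]
      rw [hsub, hT, Fin.val_last]
    · intro j _ hj
      rw [Matrix.updateRow_self, hvz j (Fin.val_lt_last hj)]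
      ring
    · exact fun h => absurd (Finset.mem_univ _) h
  -- combine
  have hb' : b ((n:ℤ) - k) ^ α ≠ 0 := pow_ne_zero _ hb
  have hkey : θ α * b ((n:ℤ) - k) = v (Fin.last α) := by
    have h2 : θ α * b ((n:ℤ) - k) ^ (α+1) = (-1:ℝ)^α * M.det := by
      rw [hθ α hαk]; field_simp; rfl
    rw [hexp] at h2
    have h3 : θ α * b ((n:ℤ) - k) * b ((n:ℤ) - k) ^ α
        = v (Fin.last α) * b ((n:ℤ) - k) ^ α := by
      calc θ α * b ((n:ℤ) - k) * b ((n:ℤ) - k) ^ α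
          = θ α * b ((n:ℤ) - k) ^ (α+1) := by ring
        _ = (-1:ℝ)^α * ((-1:ℝ)^α * v (Fin.last α) * b ((n:ℤ) - k) ^ α) := h2
        _ = v (Fin.last α) * b ((n:ℤ) - k) ^ α := by
            rw [← mul_assoc, ← mul_assoc, ← mul_pow]; norm_num
    exact mul_right_cancel₀ hb' h3
  have hlast := hvval (Fin.last α)
  rw [Fin.val_last] at hlast
  have hsum : ∑ β ∈ Finset.range α, θ β * (if β ≤ α then b ((n:ℤ) - k - α + β) else 0)
      = ∑ β ∈ Finset.range α, θ β * b ((n:ℤ) - k - α + β) :=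
    Finset.sum_congr rfl fun β hβ => by rw [if_pos (by simp at hβ; omega)]
  rw [hsum] at hlast
  rw [Finset.sum_range_succ]
  have hnk' : ((n:ℤ) - k - α + α) = (n:ℤ) - k := by ring
  rw [hnk']
  linarith [hlast]


theorem asymptote_coeff_limit (n k : ℕ) (hk : 1 ≤ k) (hnk : k < n)
    (a b : ℤ → ℝ) (ha : a n ≠ 0) (hb : b ((n : ℤ) - k) ≠ 0)
    (hb0 : ∀ m : ℤ, m < 0 → b m = 0)
    (θ : ℕ → ℝ)
    (hθ : ∀ α : ℕ, α ≤ k →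
      θ α = (-1 : ℝ) ^ α * (asymMatrix a b n k α).det / b ((n : ℤ) - k) ^ (α + 1)) :
    ∀ φ : ℕ, 1 ≤ φ → φ ≤ k →
      Tendsto (fun x : ℝ =>
          ((∑ r ∈ Finset.range (n + 1), a r * x ^ r) /
            (∑ i ∈ Finset.range (n - k + 1), b i * x ^ i)) / x ^ (k - φ)
          - ∑ α ∈ Finset.range φ, θ α * x ^ (φ - α))
        atTop (nhds (θ φ)) := by
  intro φ hφ1 hφk
  have hrec := asym_rec n k hnk a b hb θ hθ
  set p : Polynomial ℝ :=
    ∑ r ∈ Finset.range (n+1), Polynomial.C (a r) * Polynomial.X ^ r with hp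
  set q : Polynomial ℝ :=
    ∑ i ∈ Finset.range (n-k+1), Polynomial.C (b i) * Polynomial.X ^ i with hq
  set t : Polynomial ℝ :=
    ∑ α ∈ Finset.range (φ+1), Polynomial.C (θ α) * Polynomial.X ^ (k-α) with ht
  have hpc : ∀ m : ℕ, p.coeff m = if m ≤ n then a m else 0 := by
    intro m
    simp [hp, Polynomial.finset_sum_coeff, Polynomial.coeff_C_mul, Polynomial.coeff_X_pow,
      Finset.sum_ite_eq', Nat.lt_succ_iff]
  have hqc : ∀ m : ℕ, q.coeff m = if m ≤ n - k then b m else 0 := by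
    intro m
    simp [hq, Polynomial.finset_sum_coeff, Polynomial.coeff_C_mul, Polynomial.coeff_X_pow,
      Finset.sum_ite_eq', Nat.lt_succ_iff]
  have hqt : ∀ m : ℕ, (q * t).coeff m =
      ∑ α ∈ Finset.range (φ+1), θ α *
        (if k - α ≤ m then q.coeff (m - (k-α)) else 0) := by
    intro m
    rw [ht, Finset.mul_sum, Polynomial.finset_sum_coeff]
    refine Finset.sum_congr rfl fun α _ => ?_
    rw [show q * (Polynomial.C (θ α) * Polynomial.X ^ (k-α))
        = Polynomial.C (θ α) * (q * Polynomial.X ^ (k-α)) by ring]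
    rw [Polynomial.coeff_C_mul, Polynomial.coeff_mul_X_pow']
  -- numerator has vanishing top coefficients
  have hnum : ∀ m : ℕ, n - φ ≤ m → (p - q * t).coeff m = 0 := by
    intro m hm
    rw [Polynomial.coeff_sub, hpc, hqt]
    by_cases hmn : m ≤ n
    · set j := n - m with hj
      have hjφ : j ≤ φ := by omega
      have hsum : ∑ α ∈ Finset.range (φ+1), θ α *
            (if k - α ≤ m then q.coeff (m - (k-α)) else 0)
          = ∑ β ∈ Finset.range (j+1), θ β * b ((n:ℤ) - k - j + β) := by
        rw [← Finset.sum_subset (Finset.range_subset_range.2 (show j+1 ≤ φ+1 by omega))]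
        · refine Finset.sum_congr rfl fun β hβ => ?_
          have hβj : β ≤ j := by simp at hβ; omega
          congr 1
          by_cases hc : k - β ≤ m
          · rw [if_pos hc, hqc, if_pos (by omega)]
            congr 1
            omega
          · rw [if_neg hc]
            exact (hb0 _ (by omega)).symm
        · intro β hβ hβ'
          have h1 : j < β ∧ β ≤ φ := by simp at hβ hβ'; omega
          by_cases hc : k - β ≤ m
          · rw [if_pos hc, hqc, if_neg (by omega), mul_zero]
          · rw [if_neg hc, mul_zero]
      rw [hsum, ← hrec j (by omega), if_pos hmn]
      have : ((m:ℤ)) = (n:ℤ) - j := by omega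
      rw [this, sub_self]
    · rw [if_neg hmn]
      rw [Finset.sum_eq_zero fun α hα => ?_]
      · simp
      · have hαφ : α ≤ φ := by simp at hα; omega
        by_cases hc : k - α ≤ m
        · rw [if_pos hc, hqc, if_neg (by omega), mul_zero]
        · rw [if_neg hc, mul_zero]
  -- degree facts
  have hcast : ((n - k : ℕ) : ℤ) = (n:ℤ) - k := by omega
  have hqnk : q.coeff (n-k) = b ((n:ℤ) - k) := by
    rw [hqc, if_pos le_rfl, hcast]
  have hqdeg : q.degree = ((n - k : ℕ) : WithBot ℕ) := by
    apply Polynomial.degree_eq_of_le_of_coeff_ne_zero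
    · rw [Polynomial.degree_le_iff_coeff_zero]
      intro m hm
      have hm' : n - k < m := by exact_mod_cast hm
      rw [hqc, if_neg (by omega)]
    · rw [hqnk]; exact hb
  have hq0 : q ≠ 0 := fun h => hb (by rw [← hqnk, h, Polynomial.coeff_zero])
  have hdendeg : (q * Polynomial.X ^ (k - φ)).degree = ((n - φ : ℕ) : WithBot ℕ) := by
    rw [Polynomial.degree_mul, Polynomial.degree_X_pow, hqdeg]
    rw [← Nat.cast_add]
    congr 1
    omega
  have hdeglt : (p - q * t).degree < (q * Polynomial.X ^ (k - φ)).degree := by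
    rw [hdendeg]
    rw [Polynomial.degree_lt_iff_coeff_zero]
    intro m hm
    exact hnum m (by exact_mod_cast hm)
  have h0 := Polynomial.div_tendsto_zero_of_degree_lt (p - q * t) (q * Polynomial.X ^ (k - φ)) hdeglt
  have htend : Tendsto (fun x : ℝ =>
      Polynomial.eval x (p - q * t) / Polynomial.eval x (q * Polynomial.X ^ (k - φ)) + θ φ)
      atTop (nhds (θ φ)) := by
    simpa using h0.add_const (θ φ)
  refine Filter.Tendsto.congr' ?_ htend
  filter_upwards [Polynomial.eventually_no_roots q hq0, eventually_gt_atTop (0:ℝ)]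
    with x hqx hx
  have hqx' : Polynomial.eval x q ≠ 0 := hqx
  have hx0 : x ≠ 0 := ne_of_gt hx
  have hxp : x ^ (k - φ) ≠ 0 := pow_ne_zero _ hx0
  have hpe : Polynomial.eval x p = ∑ r ∈ Finset.range (n+1), a r * x ^ r := by
    simp [hp, Polynomial.eval_finset_sum]
  have hqe : Polynomial.eval x q = ∑ i ∈ Finset.range (n-k+1), b i * x ^ i := by
    simp [hq, Polynomial.eval_finset_sum]
  have hte : Polynomial.eval x t
      = (∑ α ∈ Finset.range (φ+1), θ α * x ^ (φ - α)) * x ^ (k - φ) := by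
    rw [ht, Polynomial.eval_finset_sum, Finset.sum_mul]
    refine Finset.sum_congr rfl fun α hα => ?_
    have hαφ : α ≤ φ := by simp at hα; omega
    simp only [Polynomial.eval_mul, Polynomial.eval_C, Polynomial.eval_pow, Polynomial.eval_X]
    rw [mul_assoc, ← pow_add]
    congr 2
    omega
  rw [Polynomial.eval_sub, Polynomial.eval_mul, Polynomial.eval_mul, Polynomial.eval_pow,
    Polynomial.eval_X, hte, ← hpe, ← hqe]
  rw [Finset.sum_range_succ, Nat.sub_self, pow_zero, mul_one]
  field_simp
  ring
end

section
/- (Lemma 2.2, determinant recurrence) Let (a_m) and (b_m) be families of real numbers indexed so that b_m = 0 for m < 0, fix integers n > k ≥ 1, and for each integer α ≥ 0 set θ'_α = (-1)^α · det(M_α). Then for every integer j with 1 ≤ j ≤ k, θ'_j = a_{n-j} · b_{n-k}^j − Σ_{i=0}^{j-1} b_{n-k-(j-i)} · b_{n-k}^{j-1-i} · θ'_i. -/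
open Finset

namespace DetRecAux

noncomputable def E (a b : ℤ → ℝ) (n k : ℤ) (i j : ℕ) : ℝ :=
  if i = 0 then a (n - (j:ℕ)) else if i ≤ j + 1 then b (n - k - (j:ℕ) + (i:ℕ) - 1) else 0

lemma coe_succAbove {m : ℕ} (q : Fin (m+1)) (r : Fin m) :
    ((q.succAbove r : Fin (m+1)) : ℕ) = if (r:ℕ) < (q:ℕ) then (r:ℕ) else (r:ℕ)+1 := by
  rcases Fin.lt_or_le (Fin.castSucc r) q with h|h
  · rw [Fin.succAbove_of_castSucc_lt _ _ h]
    rw [Fin.lt_def, Fin.coe_castSucc] at h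
    simp [Fin.coe_castSucc, if_pos h]
  · rw [Fin.succAbove_of_le_castSucc _ _ h]
    rw [Fin.le_def, Fin.coe_castSucc] at h
    simp [Fin.val_succ, if_neg (not_lt.2 h)]

lemma det_tri (a b : ℤ → ℝ) (n k : ℤ) (d : ℕ) (N : Matrix (Fin d) (Fin d) ℝ)
    (hN : ∀ r c : Fin d, N r c = E a b n k ((r:ℕ)+1) (c:ℕ)) :
    N.det = b (n-k) ^ d := by
  have htri : N.BlockTriangular id := by
    intro r c hrc
    have hrc' : (c:ℕ) < (r:ℕ) := hrc
    rw [hN]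
    simp only [E, Nat.succ_ne_zero, if_false]
    rw [if_neg (by omega)]
  rw [Matrix.det_of_upperTriangular htri]
  rw [Finset.prod_congr rfl (fun r _ => ?_), Finset.prod_const, Finset.card_univ,
    Fintype.card_fin]
  rw [hN]
  simp only [E, Nat.succ_ne_zero, if_false, if_pos (by omega : (r:ℕ)+1 ≤ (r:ℕ)+1)]
  congr 1
  push_cast
  ring

lemma minor_det (a b : ℤ → ℝ) (n k : ℤ) (p : ℕ) :
    ∀ d (N : Matrix (Fin (p+1+d)) (Fin (p+1+d)) ℝ),
    (∀ r c : Fin (p+1+d), N r c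
        = E a b n k (if (r:ℕ) < p+1 then (r:ℕ) else (r:ℕ)+1) (c:ℕ)) →
    N.det = b (n-k) ^ d * (asymMatrix a b n k p).det := by
  intro d
  induction d with
  | zero =>
    intro N hN
    have : N = asymMatrix a b n k p := by
      ext r c
      rw [hN, if_pos (by omega : (r:ℕ) < p+1)]
      rfl
    rw [this]; ring
  | succ d ih =>
    intro N hN
    -- re-type `N` so that the size is syntactically `(p+1+d)+1`
    let M : Matrix (Fin (p+1+d+1)) (Fin (p+1+d+1)) ℝ := Matrix.of fun r c => N r c
    have hdet : N.det = M.det := rfl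
    have hM : ∀ r c : Fin (p+1+d+1), M r c
        = E a b n k (if (r:ℕ) < p+1 then (r:ℕ) else (r:ℕ)+1) (c:ℕ) := fun r c => hN r c
    rw [hdet, Matrix.det_succ_row M (Fin.last (p+1+d))]
    have hlast : ∀ c : Fin (p+1+d+1), c ≠ Fin.last (p+1+d) → M (Fin.last (p+1+d)) c = 0 := by
      intro c hc
      have hc' : (c:ℕ) < p+1+d := by
        have h1 := c.isLt
        have h2 : (c:ℕ) ≠ p+1+d := fun h => hc (Fin.ext (by simpa using h))
        omega
      rw [hM]
      rw [if_neg (by rw [Fin.val_last]; omega)]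
      simp only [E]
      rw [if_neg (by rw [Fin.val_last]; omega), if_neg (by rw [Fin.val_last]; omega)]
    rw [Finset.sum_eq_single_of_mem (Fin.last (p+1+d)) (Finset.mem_univ _)
      (fun c _ hc => by rw [hlast c hc]; ring)]
    have h1 : M (Fin.last (p+1+d)) (Fin.last (p+1+d)) = b (n-k) := by
      rw [hM, if_neg (by rw [Fin.val_last]; omega)]
      simp only [E, Fin.val_last]
      rw [if_neg (by omega), if_pos (by omega)]
      congr 1
      push_cast
      ring
    have h2 : (M.submatrix (Fin.last (p+1+d)).succAbove (Fin.last (p+1+d)).succAbove).det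
        = b (n-k) ^ d * (asymMatrix a b n k p).det := by
      apply ih
      intro r c
      rw [Matrix.submatrix_apply, hM]
      rw [coe_succAbove, coe_succAbove]
      simp only [Fin.val_last]
      rw [if_pos r.isLt, if_pos c.isLt]
    rw [h1, h2]
    have hsgn : ((-1:ℝ)) ^ ((Fin.last (p+1+d) : ℕ) + (Fin.last (p+1+d) : ℕ)) = 1 :=
      Even.neg_one_pow ⟨(Fin.last (p+1+d) : ℕ), rfl⟩
    rw [hsgn]
    ring

end DetRecAux

open DetRecAux in
theorem det_recurrence (a b : ℤ → ℝ) (hb0 : ∀ m : ℤ, m < 0 → b m = 0)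
    (n k : ℤ) (hk : 1 ≤ k) (hnk : k < n)
    (θ' : ℕ → ℝ) (hθ' : ∀ α : ℕ, θ' α = (-1 : ℝ) ^ α * (asymMatrix a b n k α).det) :
    ∀ j : ℕ, 1 ≤ j → (j : ℤ) ≤ k →
      θ' j = a (n - j) * b (n - k) ^ j
        - ∑ i ∈ Finset.range j, b (n - k - ((j : ℤ) - i)) * b (n - k) ^ (j - 1 - i) * θ' i := by
  intro j hj _
  obtain ⟨m, rfl⟩ : ∃ m, j = m + 1 := ⟨j - 1, by omega⟩
  set A := asymMatrix a b n k (m+1) with hA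
  have hAe : ∀ i j : Fin (m+2), A i j = E a b n k (i:ℕ) (j:ℕ) := fun i j => rfl
  rw [hθ' (m+1), Matrix.det_succ_column A (Fin.last (m+1))]
  rw [Fin.sum_univ_succ]
  have hzero : A 0 (Fin.last (m+1)) = a (n - ((m:ℤ)+1)) := by
    rw [hAe]; simp [E]
  have hminor0 : (A.submatrix (Fin.succAbove 0) (Fin.last (m+1)).succAbove).det
      = b (n-k) ^ (m+1) := by
    apply det_tri a b n k
    intro r c
    rw [Matrix.submatrix_apply, hAe, coe_succAbove, coe_succAbove]
    simp only [Fin.val_zero, Fin.val_last]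
    simp [c.isLt]
  have hterm : ∀ i : Fin (m+1),
      (-1:ℝ) ^ ((Fin.succ i : ℕ) + (Fin.last (m+1) : ℕ)) * A (Fin.succ i) (Fin.last (m+1)) *
        (A.submatrix (Fin.succ i).succAbove (Fin.last (m+1)).succAbove).det
      = (-1:ℝ) ^ ((i:ℕ) + m) * (b (n - k - (((m:ℤ)+1) - (i:ℕ))) * b (n-k) ^ (m - (i:ℕ)) *
          (asymMatrix a b n k (i:ℕ)).det) := by
    intro i
    have hic : (i:ℕ) ≤ m := by omega
    have hv : A (Fin.succ i) (Fin.last (m+1)) = b (n - k - (((m:ℤ)+1) - (i:ℕ))) := by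
      rw [hAe]
      simp only [Fin.val_succ, Fin.val_last, E]
      rw [if_neg (by omega), if_pos (by omega)]
      congr 1
      push_cast
      ring
    have hm : (A.submatrix (Fin.succ i).succAbove (Fin.last (m+1)).succAbove).det
        = b (n-k) ^ (m - (i:ℕ)) * (asymMatrix a b n k (i:ℕ)).det := by
      have hsz : (i:ℕ) + 1 + (m - (i:ℕ)) = m + 1 := by omega
      set N := A.submatrix (Fin.succ i).succAbove (Fin.last (m+1)).succAbove with hNdef
      have hre : N.det = (N.submatrix (finCongr hsz) (finCongr hsz)).det :=
        (Matrix.det_submatrix_equiv_self (finCongr hsz) N).symm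
      rw [hre]
      apply minor_det a b n k (i:ℕ) (m - (i:ℕ))
      intro r c
      simp only [Matrix.submatrix_apply, hNdef, finCongr_apply]
      rw [hAe, coe_succAbove, coe_succAbove]
      simp only [Fin.val_succ, Fin.val_last, Fin.coe_cast]
      rw [if_pos (show (c:ℕ) < m+1 from by have := c.isLt; omega)]
    rw [hv, hm]
    have hsign : ((-1:ℝ)) ^ ((Fin.succ i : ℕ) + (Fin.last (m+1) : ℕ))
        = (-1:ℝ) ^ ((i:ℕ) + m) := by
      simp only [Fin.val_succ, Fin.val_last]
      rw [show (i:ℕ) + 1 + (m+1) = ((i:ℕ) + m) + 2 by ring, pow_add]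
      norm_num
    rw [hsign]
    ring
  rw [Finset.sum_congr rfl (fun i _ => hterm i)]
  rw [hzero, hminor0]
  rw [Fin.sum_univ_eq_sum_range
    (fun i => (-1:ℝ) ^ (i + m) * (b (n - k - (((m:ℤ)+1) - i)) * b (n-k) ^ (m - i) *
      (asymMatrix a b n k i).det))]
  rw [mul_add, mul_sum]
  have hA0 : ((-1:ℝ))^(m+1) * ((-1:ℝ)^(((0 : Fin (m+2)) : ℕ) + (Fin.last (m+1) : ℕ)) *
      a (n - ((m:ℤ)+1)) * b (n-k) ^ (m+1))
      = a (n - (((m:ℕ)+1 : ℕ) : ℤ)) * b (n-k) ^ (m+1) := by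
    simp only [Fin.val_last, Fin.val_zero, Nat.zero_add]
    rw [← mul_assoc, ← mul_assoc, ← pow_add]
    rw [Even.neg_one_pow ⟨m+1, by ring⟩]
    push_cast
    ring
  have hsum : ∑ i ∈ Finset.range (m+1), (-1:ℝ)^(m+1) *
        ((-1:ℝ) ^ (i + m) * (b (n - k - (((m:ℤ)+1) - i)) * b (n-k) ^ (m - i) *
          (asymMatrix a b n k i).det))
      = - ∑ i ∈ Finset.range (m+1),
          b (n - k - ((((m:ℕ)+1 : ℕ) : ℤ) - i)) * b (n-k) ^ (m+1-1-i) * θ' i := by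
    rw [← Finset.sum_neg_distrib]
    apply Finset.sum_congr rfl
    intro i hi
    rw [hθ' i]
    have h1 : ((-1:ℝ))^(m+1) * (-1:ℝ)^(i+m) = -(-1:ℝ)^i := by
      rw [← pow_add, show m+1+(i+m) = 2*m+(i+1) by ring, pow_add, pow_mul]
      norm_num [pow_succ]
    have h2 : ((((m:ℕ)+1 : ℕ) : ℤ) - (i:ℤ)) = ((m:ℤ)+1) - (i:ℤ) := by push_cast; ring
    rw [h2, show m+1-1-i = m-i from rfl]
    calc (-1:ℝ)^(m+1) * ((-1:ℝ)^(i+m) * (b (n - k - (((m:ℤ)+1) - i)) * b (n-k) ^ (m - i) *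
          (asymMatrix a b n k i).det))
        = ((-1:ℝ)^(m+1) * (-1:ℝ)^(i+m)) * (b (n - k - (((m:ℤ)+1) - i)) * b (n-k) ^ (m - i) *
          (asymMatrix a b n k i).det) := by ring
      _ = _ := by rw [h1]; ring
  rw [hA0, hsum]
  push_cast
  ring
end

section
/- (Lemma 2.1, coefficient form) Let (a_m) and (b_m) be families of real numbers with b_m = 0 for m < 0, fix integers n > k ≥ 1, and set θ'_α = (-1)^α · det(M_α). Then for every integer φ with 1 ≤ φ ≤ k and every integer z with 0 ≤ z ≤ φ−1, a_{n-z} · b_{n-k}^φ = Σ_{i=0}^{z} b_{n-k-i} · b_{n-k}^{φ-1-(z-i)} · θ'_{z-i}. -/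
open Finset

namespace CoeffCancelAux

/-- Minor family: `W b n k m j` is the minor of `M_m` obtained by deleting row 0 and
column `j`. -/
def W (b : ℤ → ℝ) (n k : ℤ) (m : ℕ) (j : Fin (m + 1)) : Matrix (Fin m) (Fin m) ℝ :=
  Matrix.of fun r c =>
    if (r : ℕ) + 1 ≤ (j.succAbove c : ℕ) + 1 then
      b (n - k - ((j.succAbove c : ℕ) : ℤ) + (((r : ℕ) : ℤ) + 1) - 1)
    else 0

lemma submatrix_eq_W (a b : ℤ → ℝ) (n k : ℤ) (z : ℕ) (j : Fin (z + 1)) :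
    (asymMatrix a b n k z).submatrix Fin.succ j.succAbove = W b n k z j := by
  ext r c
  simp [asymMatrix, W, Fin.val_succ]

noncomputable def H (b : ℤ → ℝ) (n k : ℤ) (m : ℕ) : ℝ := (W b n k m 0).det

lemma det_W_succ (b : ℤ → ℝ) (n k : ℤ) (m : ℕ) (j : Fin (m + 1)) :
    (W b n k (m + 1) j.succ).det = b (n - k) * (W b n k m j).det := by
  rw [Matrix.det_succ_column_zero, Fin.sum_univ_succ]
  have hcol0 : (j.succ.succAbove (0 : Fin (m + 1)) : ℕ) = 0 := by
    simp [Fin.succ_succAbove_zero]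
  have h1 : ∀ i : Fin m, W b n k (m + 1) j.succ i.succ 0 = 0 := by
    intro i
    simp [W, hcol0]
  have h2 : W b n k (m + 1) j.succ 0 0 = b (n - k) := by
    simp [W, hcol0]
  have h3 : (W b n k (m + 1) j.succ).submatrix (Fin.succAbove 0) Fin.succ
      = W b n k m j := by
    rw [Fin.succAbove_zero]
    ext r c
    simp only [Matrix.submatrix_apply, W, Matrix.of_apply, Fin.succ_succAbove_succ,
      Fin.val_succ]
    by_cases hrc : (r : ℕ) ≤ (j.succAbove c : ℕ)
    · rw [if_pos (by omega), if_pos (by omega)]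
      congr 1; push_cast; ring
    · rw [if_neg (by omega), if_neg (by omega)]
  simp only [h1, h2, h3, Fin.val_zero, pow_zero, one_mul, mul_zero, zero_mul,
    Finset.sum_const_zero, add_zero]

lemma submatrix_W_zero (b : ℤ → ℝ) (n k : ℤ) (m : ℕ) (c : Fin (m + 1)) :
    (W b n k (m + 1) 0).submatrix Fin.succ c.succAbove = W b n k m c := by
  ext r c'
  simp only [Matrix.submatrix_apply, W, Matrix.of_apply, Fin.val_succ]
  have h : ((0 : Fin (m + 2)).succAbove (c.succAbove c') : ℕ)
      = (c.succAbove c' : ℕ) + 1 := by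
    rw [Fin.succAbove_zero, Fin.val_succ]
  rw [h]
  by_cases hrc : (r : ℕ) ≤ (c.succAbove c' : ℕ)
  · rw [if_pos (by omega), if_pos (by omega)]
    congr 1; push_cast; ring
  · rw [if_neg (by omega), if_neg (by omega)]

lemma det_W (b : ℤ → ℝ) (n k : ℤ) :
    ∀ (m : ℕ) (j : Fin (m + 1)),
      (W b n k m j).det = b (n - k) ^ (j : ℕ) * H b n k (m - (j : ℕ)) := by
  intro m
  induction m with
  | zero =>
    intro j
    have hj : j = 0 := Fin.fin_one_eq_zero j
    subst hj
    simp [H]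
  | succ m ih =>
    intro j
    cases j using Fin.cases with
    | zero => simp [H]; rfl
    | succ j' =>
      rw [det_W_succ, ih j']
      rw [Fin.val_succ]
      rw [show m + 1 - ((j' : ℕ) + 1) = m - (j' : ℕ) by omega]
      ring

lemma H_succ (b : ℤ → ℝ) (n k : ℤ) (m : ℕ) :
    H b n k (m + 1) = ∑ c ∈ Finset.range (m + 1),
      (-1 : ℝ) ^ c * b (n - k - 1 - c) * b (n - k) ^ c * H b n k (m - c) := by
  rw [H, Matrix.det_succ_row_zero]
  rw [← Fin.sum_univ_eq_sum_range
    (fun c => (-1 : ℝ) ^ c * b (n - k - 1 - c) * b (n - k) ^ c * H b n k (m - c)) (m + 1)]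
  apply Finset.sum_congr rfl
  intro c _
  rw [submatrix_W_zero, det_W]
  have h0 : ((0 : Fin (m + 2)).succAbove c : ℕ) = (c : ℕ) + 1 := by
    rw [Fin.succAbove_zero, Fin.val_succ]
  have he : W b n k (m + 1) 0 0 c = b (n - k - 1 - (c : ℕ)) := by
    simp only [W, Matrix.of_apply, h0, Fin.val_zero]
    rw [if_pos (by omega)]
    congr 1; push_cast; ring
  rw [he]
  ring

lemma H_zero (b : ℤ → ℝ) (n k : ℤ) : H b n k 0 = 1 := by
  simp [H, Matrix.det_fin_zero]

lemma s_lemma (b : ℤ → ℝ) (n k : ℤ) (m : ℕ) :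
    ∑ i ∈ Finset.range (m + 1),
      (-1 : ℝ) ^ i * b (n - k - i) * b (n - k) ^ i * H b n k (m - i)
    = if m = 0 then b (n - k) else 0 := by
  cases m with
  | zero => simp [H_zero]
  | succ m =>
    rw [Finset.sum_range_succ']
    have hstep : ∀ i ∈ Finset.range (m + 1),
        (-1 : ℝ) ^ (i + 1) * b (n - k - (i + 1 : ℕ)) * b (n - k) ^ (i + 1)
            * H b n k (m + 1 - (i + 1))
        = -b (n - k) *
          ((-1 : ℝ) ^ i * b (n - k - 1 - i) * b (n - k) ^ i * H b n k (m - i)) := by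
      intro i _
      have h1 : (n - k - ((i : ℕ) + 1 : ℕ) : ℤ) = n - k - 1 - (i : ℕ) := by
        push_cast; ring
      have h2 : m + 1 - (i + 1) = m - i := by omega
      rw [h1, h2]
      ring
    rw [Finset.sum_congr rfl hstep, ← Finset.mul_sum, ← H_succ]
    have : ((-1 : ℝ)) ^ 0 * b (n - k - (0 : ℕ)) * b (n - k) ^ 0 * H b n k (m + 1 - 0)
        = b (n - k) * H b n k (m + 1) := by
      norm_num
    rw [this]
    simp [mul_comm]

lemma det_M (a b : ℤ → ℝ) (n k : ℤ) (z : ℕ) :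
    (asymMatrix a b n k z).det = ∑ j ∈ Finset.range (z + 1),
      (-1 : ℝ) ^ j * a (n - j) * b (n - k) ^ j * H b n k (z - j) := by
  rw [Matrix.det_succ_row_zero]
  rw [← Fin.sum_univ_eq_sum_range
    (fun j => (-1 : ℝ) ^ j * a (n - j) * b (n - k) ^ j * H b n k (z - j)) (z + 1)]
  apply Finset.sum_congr rfl
  intro j _
  rw [submatrix_eq_W, det_W]
  have he : asymMatrix a b n k z 0 j = a (n - (j : ℕ)) := by
    simp [asymMatrix]
  rw [he]
  ring

lemma core (a b : ℤ → ℝ) (n k : ℤ) (θ' : ℕ → ℝ)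
    (hθ' : ∀ α : ℕ, θ' α = (-1 : ℝ) ^ α * (asymMatrix a b n k α).det) (z : ℕ) :
    a (n - z) * b (n - k) ^ (z + 1) =
      ∑ i ∈ Finset.range (z + 1), b (n - k - i) * b (n - k) ^ i * θ' (z - i) := by
  have step1 : ∀ i ∈ Finset.range (z + 1),
      b (n - k - (i : ℕ)) * b (n - k) ^ i * θ' (z - i)
      = ∑ j ∈ Finset.range (z + 1 - i),
          ((-1 : ℝ) ^ (z - j) * a (n - j) * b (n - k) ^ j) *
            ((-1 : ℝ) ^ i * b (n - k - (i : ℕ)) * b (n - k) ^ i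
              * H b n k ((z - j) - i)) := by
    intro i hi
    rw [Finset.mem_range] at hi
    rw [hθ', det_M]
    have hr : z - i + 1 = z + 1 - i := by omega
    rw [Finset.mul_sum, Finset.mul_sum, ← hr]
    apply Finset.sum_congr rfl
    intro j hj
    rw [Finset.mem_range] at hj
    have sq : ∀ t : ℕ, ((-1 : ℝ) ^ t) * ((-1 : ℝ) ^ t) = 1 := by
      intro t
      rw [← pow_add, ← two_mul, pow_mul]
      norm_num
    have hsg : ((-1 : ℝ)) ^ (z - i) * (-1 : ℝ) ^ j = (-1 : ℝ) ^ (z - j) * (-1 : ℝ) ^ i := by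
      have e1 : z - i = (z - i - j) + j := by omega
      have e2 : z - j = (z - i - j) + i := by omega
      rw [e1, e2, pow_add, pow_add, mul_assoc, mul_assoc, sq, sq]
    have hh : z - i - j = z - j - i := by omega
    calc b (n - k - (i : ℕ)) * b (n - k) ^ i *
          ((-1 : ℝ) ^ (z - i) * ((-1 : ℝ) ^ j * a (n - j) * b (n - k) ^ j
            * H b n k (z - i - j)))
        = ((-1 : ℝ) ^ (z - i) * (-1 : ℝ) ^ j) *
            (b (n - k - (i : ℕ)) * b (n - k) ^ i * a (n - j) * b (n - k) ^ j
              * H b n k (z - i - j)) := by ring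
      _ = ((-1 : ℝ) ^ (z - j) * (-1 : ℝ) ^ i) *
            (b (n - k - (i : ℕ)) * b (n - k) ^ i * a (n - j) * b (n - k) ^ j
              * H b n k (z - j - i)) := by rw [hsg, hh]
      _ = ((-1 : ℝ) ^ (z - j) * a (n - j) * b (n - k) ^ j) *
            ((-1 : ℝ) ^ i * b (n - k - (i : ℕ)) * b (n - k) ^ i
              * H b n k ((z - j) - i)) := by ring
  rw [Finset.sum_congr rfl step1]
  rw [Finset.sum_comm' (t' := Finset.range (z + 1))
    (s' := fun j => Finset.range (z + 1 - j))
    (by intro x y; simp only [Finset.mem_range]; omega)]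
  have step2 : ∀ j ∈ Finset.range (z + 1),
      (∑ i ∈ Finset.range (z + 1 - j),
        ((-1 : ℝ) ^ (z - j) * a (n - j) * b (n - k) ^ j) *
          ((-1 : ℝ) ^ i * b (n - k - (i : ℕ)) * b (n - k) ^ i * H b n k ((z - j) - i)))
      = ((-1 : ℝ) ^ (z - j) * a (n - j) * b (n - k) ^ j) *
          (if z - j = 0 then b (n - k) else 0) := by
    intro j hj
    rw [Finset.mem_range] at hj
    rw [← Finset.mul_sum]
    congr 1
    have hr : z + 1 - j = (z - j) + 1 := by omega
    rw [hr, s_lemma]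
  rw [Finset.sum_congr rfl step2]
  rw [Finset.sum_eq_single z]
  · rw [Nat.sub_self, if_pos rfl, pow_zero, one_mul, pow_succ, mul_assoc]
  · intro j hj hne
    rw [Finset.mem_range] at hj
    rw [if_neg (by omega), mul_zero]
  · intro h
    exact absurd (Finset.self_mem_range_succ z) h

end CoeffCancelAux

theorem coeff_cancellation (a b : ℤ → ℝ) (hb0 : ∀ m : ℤ, m < 0 → b m = 0)
    (n k : ℤ) (hk : 1 ≤ k) (hnk : k < n)
    (θ' : ℕ → ℝ) (hθ' : ∀ α : ℕ, θ' α = (-1 : ℝ) ^ α * (asymMatrix a b n k α).det) :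
    ∀ φ z : ℕ, 1 ≤ φ → (φ : ℤ) ≤ k → z ≤ φ - 1 →
      a (n - z) * b (n - k) ^ φ =
        ∑ i ∈ Finset.range (z + 1),
          b (n - k - i) * b (n - k) ^ (φ - 1 - (z - i)) * θ' (z - i) := by
  intro φ z hφ hφk hz
  have hz1 : z + 1 ≤ φ := by omega
  have hE := CoeffCancelAux.core a b n k θ' hθ' z
  calc a (n - z) * b (n - k) ^ φ
      = (a (n - z) * b (n - k) ^ (z + 1)) * b (n - k) ^ (φ - 1 - z) := by
        rw [mul_assoc, ← pow_add]
        congr 2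
        omega
    _ = (∑ i ∈ Finset.range (z + 1),
          b (n - k - i) * b (n - k) ^ i * θ' (z - i)) * b (n - k) ^ (φ - 1 - z) := by
        rw [hE]
    _ = ∑ i ∈ Finset.range (z + 1),
          b (n - k - i) * b (n - k) ^ (φ - 1 - (z - i)) * θ' (z - i) := by
        rw [Finset.sum_mul]
        apply Finset.sum_congr rfl
        intro i hi
        rw [Finset.mem_range] at hi
        have : φ - 1 - (z - i) = i + (φ - 1 - z) := by omega
        rw [this, pow_add]
        ring
end

section
/- Let a(x) = a_n x^n + ... + a_0 and b(x) = b_{n-k} x^{n-k} + ... + b_0 be real polynomials with a_n ≠ 0, b_{n-k} ≠ 0, where n > k ≥ 1 are integers (with the convention b_m = 0 for m < 0), and set θ'_α = (-1)^α · det(M_α). Then for every integer φ with 1 ≤ φ ≤ k, lim_{x→+∞} ( a(x)/(x^{k-φ} b(x)) − Σ_{α=0}^{φ-1} (θ'_α / b_{n-k}^{α+1}) x^{φ-α} ) = ( a_{n-φ} b_{n-k}^φ − Σ_{i=0}^{φ-1} b_{n-k-(φ-i)} b_{n-k}^{φ-1-i} θ'_i ) / b_{n-k}^{φ+1}. -/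
open Filter Finset

lemma aux_det_updateRow_sub_sum {N : ℕ} (A : Matrix (Fin (N+1)) (Fin (N+1)) ℝ)
    (s : Finset ℕ) (f : ℕ → ℝ) (g : ℕ → Fin (N+1)) (hg : ∀ i ∈ s, g i ≠ 0) :
    (A.updateRow 0 (fun j => A 0 j - ∑ i ∈ s, f i * A (g i) j)).det = A.det := by
  induction s using Finset.induction_on with
  | empty => simp
  | @insert i s hi ih =>
    have hgi : g i ≠ 0 := hg i (Finset.mem_insert_self i s)
    have h1 : (fun j => A 0 j - ∑ t ∈ insert i s, f t * A (g t) j)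
        = (fun j => A 0 j - ∑ t ∈ s, f t * A (g t) j) + (-f i) • (A (g i)) := by
      funext j
      simp [Finset.sum_insert hi]
      ring
    rw [h1, Matrix.det_updateRow_add, Matrix.det_updateRow_smul,
      ih (fun t ht => hg t (Finset.mem_insert_of_mem ht))]
    have h0 : (A.updateRow 0 (A (g i))).det = 0 := by
      apply Matrix.det_zero_of_row_eq (Ne.symm hgi)
      rw [Matrix.updateRow_self, Matrix.updateRow_ne hgi]
    rw [h0]
    ring

lemma asym_key (a b : ℤ → ℝ) (n k : ℤ) (hB : b (n - k) ≠ 0) (α : ℕ) :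
    ∑ i ∈ Finset.range (α + 1),
      ((-1 : ℝ) ^ i * (asymMatrix a b n k i).det / b (n - k) ^ (i + 1)) * b (n - k - α + i)
      = a (n - α) := by
  induction α using Nat.strong_induction_on with
  | _ α IH =>
  set B := b (n - k) with hBdef
  set c : ℕ → ℝ := fun i => (-1 : ℝ) ^ i * (asymMatrix a b n k i).det / B ^ (i + 1) with hc
  set M := asymMatrix a b n k α with hM
  set g : ℕ → Fin (α + 1) := fun i => ⟨min (i+1) α, by omega⟩ with hgdef
  set v : Fin (α + 1) → ℝ := fun j => M 0 j - ∑ i ∈ Finset.range α, c i * M (g i) j with hv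
  have hg : ∀ i ∈ Finset.range α, g i ≠ 0 := by
    intro i hi
    simp only [Finset.mem_range] at hi
    simp only [hgdef, Ne, Fin.ext_iff, Fin.val_zero]
    omega
  have hdet : (M.updateRow 0 v).det = M.det :=
    aux_det_updateRow_sub_sum M (Finset.range α) c g hg
  -- entry formula for b-rows
  have hentry : ∀ (i : ℕ) (j : Fin (α+1)), i < α →
      M (g i) j = if i ≤ (j : ℕ) then b (n - k - (j : ℕ) + i) else 0 := by
    intro i j hi
    have hgi : ((g i : Fin (α+1)) : ℕ) = i + 1 := by simp [hgdef]; omega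
    simp only [hM, asymMatrix, Matrix.of_apply]
    rw [hgi]
    rw [if_neg (by omega : ¬ (i + 1 = 0))]
    by_cases h : i + 1 ≤ (j : ℕ) + 1
    · rw [if_pos h, if_pos (by omega)]
      congr 1
      push_cast
      ring
    · rw [if_neg h, if_neg (by omega)]
  -- v j = 0 for j < α
  have hv0 : ∀ j : Fin (α+1), (j : ℕ) < α → v j = 0 := by
    intro j hj
    have hrow0 : M 0 j = a (n - (j : ℕ)) := by simp [hM, asymMatrix]
    have hsum : ∑ i ∈ Finset.range α, c i * M (g i) j
        = ∑ i ∈ Finset.range ((j : ℕ) + 1), c i * b (n - k - (j : ℕ) + i) := by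
      rw [← Finset.sum_subset (Finset.range_subset_range.mpr (by omega : (j:ℕ)+1 ≤ α))]
      · apply Finset.sum_congr rfl
        intro i hi
        simp only [Finset.mem_range] at hi
        rw [hentry i j (by omega), if_pos (by omega)]
      · intro i hi hni
        simp only [Finset.mem_range] at hi hni
        rw [hentry i j hi, if_neg (by omega), mul_zero]
    rw [hv]
    simp only
    rw [hrow0, hsum, IH (j : ℕ) hj]
    ring
  -- v at last
  have hvlast : v (Fin.last α) = a (n - α) - ∑ i ∈ Finset.range α, c i * b (n - k - α + i) := by
    have hrow0 : M 0 (Fin.last α) = a (n - α) := by simp [hM, asymMatrix]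
    rw [hv]
    simp only [hrow0, Fin.val_last]
    congr 1
    apply Finset.sum_congr rfl
    intro i hi
    simp only [Finset.mem_range] at hi
    rw [hentry i (Fin.last α) hi, Fin.val_last, if_pos (by omega)]
  -- determinant of updated matrix by row expansion
  have hexp : (M.updateRow 0 v).det
      = (-1 : ℝ) ^ α * v (Fin.last α) * B ^ α := by
    rw [Matrix.det_succ_row_zero]
    rw [Finset.sum_eq_single (Fin.last α)]
    · have hsub : ((M.updateRow 0 v).submatrix Fin.succ (Fin.last α).succAbove).det = B ^ α := by
        have htri : ((M.updateRow 0 v).submatrix Fin.succ (Fin.last α).succAbove).BlockTriangular id := by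
          intro i j hij
          simp only [Matrix.submatrix_apply]
          rw [Matrix.updateRow_ne (by exact Fin.succ_ne_zero i)]
          simp only [hM, asymMatrix, Matrix.of_apply, Fin.succAbove_last, Fin.coe_castSucc,
            Fin.val_succ]
          rw [if_neg (by omega), if_neg (by simp only [id] at hij; exact_mod_cast by omega)]
        rw [Matrix.det_of_upperTriangular htri]
        have : ∀ i : Fin α, ((M.updateRow 0 v).submatrix Fin.succ (Fin.last α).succAbove) i i = B := by
          intro i
          simp only [Matrix.submatrix_apply]
          rw [Matrix.updateRow_ne (by exact Fin.succ_ne_zero i)]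
          simp only [hM, asymMatrix, Matrix.of_apply, Fin.succAbove_last, Fin.coe_castSucc,
            Fin.val_succ]
          rw [if_neg (by omega), if_pos (by omega)]
          rw [hBdef]
          congr 1
          push_cast
          ring
        rw [Finset.prod_congr rfl (fun i _ => this i)]
        simp
      rw [Matrix.updateRow_self, hsub, Fin.val_last]
    · intro j _ hj
      have : (j : ℕ) < α := by
        have := Fin.val_lt_last hj
        simpa using this
      rw [Matrix.updateRow_self, hv0 j this]
      ring
    · intro h
      exact absurd (Finset.mem_univ _) h
  -- put together
  have hMdet : M.det = (-1 : ℝ) ^ α * (a (n - α) - ∑ i ∈ Finset.range α, c i * b (n - k - α + i)) * B ^ α := by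
    rw [← hdet, hexp, hvlast]
  have hpow : (-1 : ℝ) ^ α * (-1 : ℝ) ^ α = 1 := by
    rw [← pow_add, ← two_mul, pow_mul]
    norm_num
  have haux : ∀ E : ℝ, (-1 : ℝ) ^ α * ((-1 : ℝ) ^ α * E * B ^ α) / B ^ (α + 1) * B = E := by
    intro E
    have hBp : B ^ (α + 1) ≠ 0 := pow_ne_zero _ hB
    field_simp
    linear_combination (E * B ^ α * B) * hpow
  have hcα : c α = (-1 : ℝ) ^ α * M.det / B ^ (α + 1) := by rw [hc, hM]
  have hlast : c α * B = a (n - α) - ∑ i ∈ Finset.range α, c i * b (n - k - α + i) := by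
    rw [hcα, hMdet]
    exact haux _
  calc ∑ i ∈ Finset.range (α + 1),
      ((-1 : ℝ) ^ i * (asymMatrix a b n k i).det / B ^ (i + 1)) * b (n - k - α + i)
      = ∑ i ∈ Finset.range (α + 1), c i * b (n - k - α + i) := by
        apply Finset.sum_congr rfl; intro i _; rw [hc]
    _ = (∑ i ∈ Finset.range α, c i * b (n - k - α + i)) + c α * b (n - k - α + α) := by
        rw [Finset.sum_range_succ]
    _ = a (n - α) := by
        have : n - k - α + α = n - k := by ring
        rw [this, ← hBdef, hlast]
        ring

lemma tendsto_poly_div (m : ℕ) (ρ : ℕ → ℝ) :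
    Tendsto (fun x : ℝ => (∑ r ∈ Finset.range (m + 1), ρ r * x ^ r) / x ^ m)
      atTop (nhds (ρ m)) := by
  have h1 : Tendsto (fun x : ℝ => ∑ r ∈ Finset.range (m + 1), ρ r * x ^ ((r : ℤ) - m))
      atTop (nhds (∑ r ∈ Finset.range (m + 1), if r = m then ρ m else 0)) := by
    apply tendsto_finset_sum
    intro r hr
    simp only [Finset.mem_range] at hr
    by_cases h : r = m
    · subst h
      simpa using tendsto_const_nhds
    · rw [if_neg h]
      have hneg : (r : ℤ) - m < 0 := by omega
      have := (tendsto_zpow_atTop_zero hneg).const_mul (ρ r)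
      simpa using this
  have h2 : (∑ r ∈ Finset.range (m + 1), if r = m then ρ m else 0) = ρ m := by
    rw [Finset.sum_ite_eq' (Finset.range (m+1)) m (fun _ => ρ m)]
    simp
  rw [h2] at h1
  apply h1.congr'
  filter_upwards [eventually_gt_atTop (0 : ℝ)] with x hx
  rw [Finset.sum_div]
  apply Finset.sum_congr rfl
  intro r _
  rw [mul_div_assoc]
  congr 1
  rw [← zpow_natCast x r, ← zpow_natCast x m, ← zpow_sub₀ (ne_of_gt hx)]

theorem inductive_step_limit (n k : ℕ) (hk : 1 ≤ k) (hnk : k < n)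
    (a b : ℤ → ℝ) (ha : a n ≠ 0) (hb : b ((n : ℤ) - k) ≠ 0)
    (hb0 : ∀ m : ℤ, m < 0 → b m = 0)
    (θ' : ℕ → ℝ) (hθ' : ∀ α : ℕ, θ' α = (-1 : ℝ) ^ α * (asymMatrix a b n k α).det) :
    ∀ φ : ℕ, 1 ≤ φ → φ ≤ k →
      Tendsto (fun x : ℝ =>
          (∑ r ∈ Finset.range (n + 1), a r * x ^ r) /
            (x ^ (k - φ) * ∑ i ∈ Finset.range (n - k + 1), b i * x ^ i)
          - ∑ α ∈ Finset.range φ,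
              (θ' α / b ((n : ℤ) - k) ^ (α + 1)) * x ^ (φ - α))
        atTop
        (nhds ((a ((n : ℤ) - φ) * b ((n : ℤ) - k) ^ φ
          - ∑ i ∈ Finset.range φ,
              b ((n : ℤ) - k - ((φ : ℤ) - i)) * b ((n : ℤ) - k) ^ (φ - 1 - i) * θ' i) /
          b ((n : ℤ) - k) ^ (φ + 1))) := by
  intro φ hφ1 hφk
  set B := b ((n : ℤ) - k) with hBdef
  set c : ℕ → ℝ := fun i => θ' i / B ^ (i + 1) with hcdef
  have hφn : φ ≤ n := le_trans hφk (le_of_lt hnk)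
  have hkn : k ≤ n := le_of_lt hnk
  -- the key coefficient identity
  have key : ∀ α : ℕ, ∑ i ∈ Finset.range (α + 1), c i * b ((n:ℤ) - k - α + i)
      = a ((n:ℤ) - α) := by
    intro α
    have h := asym_key a b n k hb α
    rw [← h]
    apply Finset.sum_congr rfl
    intro i _
    rw [hcdef]
    simp only
    rw [hθ' i, hBdef]
  -- truncated b coefficients
  set Bc : ℤ → ℝ := fun m => if m ≤ (n:ℤ) - k then b m else 0 with hBcdef
  have hBcb : ∀ m : ℤ, m ≤ (n:ℤ) - k → Bc m = b m := by
    intro m hm; rw [hBcdef]; simp only [if_pos hm]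
  have hBc0 : ∀ m : ℤ, (n:ℤ) - k < m → Bc m = 0 := by
    intro m hm; rw [hBcdef]; simp only [if_neg (not_le.mpr hm)]
  have hBcneg : ∀ m : ℤ, m < 0 → Bc m = 0 := by
    intro m hm
    rw [hBcb m (by omega), hb0 m hm]
  -- new coefficients
  set ρ : ℕ → ℝ := fun r => a r - ∑ α ∈ Finset.range φ, c α * Bc ((r:ℤ) - k + α) with hρdef
  -- reindexing lemma
  have hQpow : ∀ α : ℕ, α < φ → ∀ x : ℝ,
      (∑ i ∈ Finset.range (n - k + 1), b i * x ^ i) * x ^ (k - α)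
        = ∑ r ∈ Finset.range (n + 1), Bc ((r:ℤ) - k + α) * x ^ r := by
    intro α hα x
    have hαk : α ≤ k := le_trans (le_of_lt hα) hφk
    have h1 : (∑ i ∈ Finset.range (n - k + 1), b i * x ^ i) * x ^ (k - α)
        = ∑ i ∈ Finset.range (n - k + 1), Bc i * x ^ (i + (k - α)) := by
      rw [Finset.sum_mul]
      apply Finset.sum_congr rfl
      intro i hi
      simp only [Finset.mem_range] at hi
      rw [hBcb i (by push_cast; omega), pow_add]
      ring
    rw [h1]
    have h4 : ∑ i ∈ Finset.range (n - k + 1), Bc i * x ^ (i + (k - α))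
        = ∑ i ∈ Finset.range (n - k + 1),
            Bc (((i + (k - α) : ℕ) : ℤ) - k + α) * x ^ (i + (k - α)) := by
      apply Finset.sum_congr rfl
      intro i hi
      congr 2
      push_cast [Nat.cast_sub hαk]
      ring
    have hinj : ∀ x1 ∈ Finset.range (n - k + 1), ∀ x2 ∈ Finset.range (n - k + 1),
        x1 + (k - α) = x2 + (k - α) → x1 = x2 := by
      intro x1 _ x2 _ h
      omega
    have h5 : ∑ r ∈ (Finset.range (n - k + 1)).image (· + (k - α)),
          Bc ((r:ℤ) - k + α) * x ^ r
        = ∑ i ∈ Finset.range (n - k + 1),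
            Bc (((i + (k - α) : ℕ) : ℤ) - k + α) * x ^ (i + (k - α)) :=
      Finset.sum_image hinj
    have h6 : ∑ r ∈ (Finset.range (n - k + 1)).image (· + (k - α)),
          Bc ((r:ℤ) - k + α) * x ^ r
        = ∑ r ∈ Finset.range (n + 1), Bc ((r:ℤ) - k + α) * x ^ r := by
      apply Finset.sum_subset
      · intro r hr
        simp only [Finset.mem_image, Finset.mem_range] at hr
        obtain ⟨i, hi, rfl⟩ := hr
        simp only [Finset.mem_range]
        omega
      · intro r hr hnr
        simp only [Finset.mem_range] at hr
        simp only [Finset.mem_image, Finset.mem_range] at hnr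
        by_cases hc1 : r < k - α
        · rw [hBcneg _ (by push_cast; omega), zero_mul]
        · have hc2 : n - α < r := by
            by_contra hc2
            push_neg at hc2
            exact hnr ⟨r - (k - α), by omega, by omega⟩
          rw [hBc0 _ (by push_cast; omega), zero_mul]
    rw [h4, ← h5, h6]
  -- the polynomial identity
  have hpoly : ∀ x : ℝ,
      (∑ r ∈ Finset.range (n + 1), a r * x ^ r)
        - (x ^ (k - φ) * ∑ i ∈ Finset.range (n - k + 1), b i * x ^ i)
          * (∑ α ∈ Finset.range φ, c α * x ^ (φ - α))
      = ∑ r ∈ Finset.range (n + 1), ρ r * x ^ r := by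
    intro x
    have h1 : (x ^ (k - φ) * ∑ i ∈ Finset.range (n - k + 1), b i * x ^ i)
          * (∑ α ∈ Finset.range φ, c α * x ^ (φ - α))
        = ∑ α ∈ Finset.range φ, c α *
            ((∑ i ∈ Finset.range (n - k + 1), b i * x ^ i) * x ^ (k - α)) := by
      rw [Finset.mul_sum]
      apply Finset.sum_congr rfl
      intro α hα
      simp only [Finset.mem_range] at hα
      have : x ^ (k - φ) * x ^ (φ - α) = x ^ (k - α) := by
        rw [← pow_add]
        congr 1
        omega
      calc x ^ (k - φ) * (∑ i ∈ Finset.range (n - k + 1), b i * x ^ i) * (c α * x ^ (φ - α))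
          = c α * ((∑ i ∈ Finset.range (n - k + 1), b i * x ^ i)
              * (x ^ (k - φ) * x ^ (φ - α))) := by ring
        _ = _ := by rw [this]
    rw [h1]
    have h2 : ∑ α ∈ Finset.range φ, c α *
            ((∑ i ∈ Finset.range (n - k + 1), b i * x ^ i) * x ^ (k - α))
        = ∑ r ∈ Finset.range (n + 1),
            (∑ α ∈ Finset.range φ, c α * Bc ((r:ℤ) - k + α)) * x ^ r := by
      calc ∑ α ∈ Finset.range φ, c α *
            ((∑ i ∈ Finset.range (n - k + 1), b i * x ^ i) * x ^ (k - α))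
          = ∑ α ∈ Finset.range φ, ∑ r ∈ Finset.range (n + 1),
              c α * (Bc ((r:ℤ) - k + α) * x ^ r) := by
            refine Finset.sum_congr rfl fun α hα => ?_
            rw [hQpow α (Finset.mem_range.mp hα) x, Finset.mul_sum]
        _ = ∑ r ∈ Finset.range (n + 1), ∑ α ∈ Finset.range φ,
              c α * (Bc ((r:ℤ) - k + α) * x ^ r) := Finset.sum_comm
        _ = _ := by
            refine Finset.sum_congr rfl fun r _ => ?_
            rw [Finset.sum_mul]
            exact Finset.sum_congr rfl fun α _ => by ring
    rw [h2, ← Finset.sum_sub_distrib]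
    refine Finset.sum_congr rfl fun r _ => ?_
    rw [hρdef]
    simp only
    ring
  -- coefficients above n - φ vanish
  have hρ0 : ∀ r : ℕ, n - φ < r → r < n + 1 → ρ r = 0 := by
    intro r h1 h2
    set j : ℕ := n - r with hjdef
    have hjφ : j < φ := by omega
    have hrj : (r : ℤ) = (n : ℤ) - j := by push_cast [hjdef, Nat.cast_sub (by omega : r ≤ n)]; ring
    have hsplit : ∑ α ∈ Finset.range φ, c α * Bc ((r:ℤ) - k + α)
        = ∑ α ∈ Finset.range (j + 1), c α * b ((n:ℤ) - k - j + α) := by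
      rw [← Finset.sum_subset (Finset.range_subset_range.mpr (by omega : j + 1 ≤ φ))]
      · apply Finset.sum_congr rfl
        intro α hα
        simp only [Finset.mem_range] at hα
        rw [hrj, hBcb _ (by push_cast; omega)]
        congr 2
        ring
      · intro α hα hnα
        simp only [Finset.mem_range] at hα hnα
        rw [hrj, hBc0 _ (by push_cast; omega), mul_zero]
    rw [hρdef]
    simp only
    rw [hsplit, key j, hrj, sub_self]
  -- the truncated polynomial identity
  have hpoly' : ∀ x : ℝ,
      (∑ r ∈ Finset.range (n + 1), a r * x ^ r)
        - (x ^ (k - φ) * ∑ i ∈ Finset.range (n - k + 1), b i * x ^ i)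
          * (∑ α ∈ Finset.range φ, c α * x ^ (φ - α))
      = ∑ r ∈ Finset.range (n - φ + 1), ρ r * x ^ r := by
    intro x
    rw [hpoly x, ← Finset.sum_subset (Finset.range_subset_range.mpr (by omega : n - φ + 1 ≤ n + 1))]
    intro r hr hnr
    simp only [Finset.mem_range] at hr hnr
    rw [hρ0 r (by omega) hr, zero_mul]
  -- limit of the denominator quotient
  have hQlim : Tendsto (fun x : ℝ =>
      (∑ i ∈ Finset.range (n - k + 1), b i * x ^ i) / x ^ (n - k)) atTop (nhds B) := by
    have h := tendsto_poly_div (n - k) (fun i => b i)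
    have : b ((n - k : ℕ) : ℤ) = B := by
      rw [hBdef]; congr 1; push_cast [Nat.cast_sub hkn]; ring
    rwa [this] at h
  have hDlim : Tendsto (fun x : ℝ =>
      (x ^ (k - φ) * ∑ i ∈ Finset.range (n - k + 1), b i * x ^ i) / x ^ (n - φ))
      atTop (nhds B) := by
    apply hQlim.congr'
    filter_upwards [eventually_gt_atTop (0 : ℝ)] with x hx
    have hxs : x ^ (n - φ) = x ^ (k - φ) * x ^ (n - k) := by
      rw [← pow_add]; congr 1; omega
    rw [hxs, mul_div_mul_left _ _ (pow_ne_zero _ (ne_of_gt hx))]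
  -- top coefficient
  have hρtop : ρ (n - φ) = a ((n:ℤ) - φ) - ∑ i ∈ Finset.range φ, c i * b ((n:ℤ) - k - φ + i) := by
    rw [hρdef]
    simp only
    have hcast : ((n - φ : ℕ) : ℤ) = (n : ℤ) - φ := by push_cast [Nat.cast_sub hφn]; ring
    rw [hcast]
    congr 1
    apply Finset.sum_congr rfl
    intro α hα
    simp only [Finset.mem_range] at hα
    rw [hBcb _ (by push_cast; omega)]
    congr 2
    ring
  have hRlim : Tendsto (fun x : ℝ =>
      (∑ r ∈ Finset.range (n - φ + 1), ρ r * x ^ r) / x ^ (n - φ)) atTop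
      (nhds (a ((n:ℤ) - φ) - ∑ i ∈ Finset.range φ, c i * b ((n:ℤ) - k - φ + i))) := by
    have h := tendsto_poly_div (n - φ) ρ
    rwa [hρtop] at h
  -- eventual nonvanishing of Q
  have hQne : ∀ᶠ x : ℝ in atTop,
      (∑ i ∈ Finset.range (n - k + 1), b i * x ^ i) / x ^ (n - k) ≠ 0 :=
    hQlim.eventually_ne hb
  -- the limit value
  have hval : (a ((n : ℤ) - φ) * B ^ φ
          - ∑ i ∈ Finset.range φ, b ((n : ℤ) - k - ((φ : ℤ) - i)) * B ^ (φ - 1 - i) * θ' i) /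
          B ^ (φ + 1)
      = (a ((n:ℤ) - φ) - ∑ i ∈ Finset.range φ, c i * b ((n:ℤ) - k - φ + i)) / B := by
    have hterm : ∀ i ∈ Finset.range φ,
        b ((n : ℤ) - k - ((φ : ℤ) - i)) * B ^ (φ - 1 - i) * θ' i
          = (c i * b ((n:ℤ) - k - φ + i)) * B ^ φ := by
      intro i hi
      simp only [Finset.mem_range] at hi
      have hθ : θ' i = c i * B ^ (i + 1) := by
        rw [hcdef]
        simp only
        rw [div_mul_cancel₀ _ (pow_ne_zero _ hb)]
      have hidx : (n : ℤ) - k - ((φ : ℤ) - i) = (n:ℤ) - k - φ + i := by ring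
      have hpow : B ^ (φ - 1 - i) * B ^ (i + 1) = B ^ φ := by
        rw [← pow_add]; congr 1; omega
      rw [hθ, hidx]
      linear_combination (b ((n:ℤ) - k - φ + i) * c i) * hpow
    rw [Finset.sum_congr rfl hterm, ← Finset.sum_mul, ← sub_mul, pow_succ]
    field_simp
  -- main limit
  rw [hval]
  have hmain := hRlim.div hDlim hb
  apply hmain.congr'
  filter_upwards [eventually_gt_atTop (0 : ℝ), hQne] with x hx hQx
  have hQx' : (∑ i ∈ Finset.range (n - k + 1), b i * x ^ i) ≠ 0 := by
    intro h; exact hQx (by rw [h, zero_div])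
  have hD : x ^ (k - φ) * (∑ i ∈ Finset.range (n - k + 1), b i * x ^ i) ≠ 0 :=
    mul_ne_zero (pow_ne_zero _ (ne_of_gt hx)) hQx'
  have hxp : (x : ℝ) ^ (n - φ) ≠ 0 := pow_ne_zero _ (ne_of_gt hx)
  have h1 : (∑ r ∈ Finset.range (n - φ + 1), ρ r * x ^ r) / x ^ (n - φ) /
      ((x ^ (k - φ) * ∑ i ∈ Finset.range (n - k + 1), b i * x ^ i) / x ^ (n - φ))
      = (∑ r ∈ Finset.range (n - φ + 1), ρ r * x ^ r) /
        (x ^ (k - φ) * ∑ i ∈ Finset.range (n - k + 1), b i * x ^ i) := by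
    rw [div_div_div_cancel_right₀ hxp]
  simp only [Pi.div_apply]
  rw [h1, ← hpoly' x, sub_div, mul_div_cancel_left₀ _ hD]
end
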